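/- arXiv:2603.08239 — 7 statements merged into one kernel-verified Lean document; each statement's English description precedes it below -/
import Mathlib

section
/- Assume M(s) > 0 for every s ∈ S. If Δ* ∈ C maximizes j over C (i.e., j(Δ') ≤ j(Δ*) for every Δ' ∈ C), then for every s ∈ S: D̂(s,Δ*) = t* and Σ_{a∈X_s} n_{s,a} Δ*_{s,a} Â_{s,a} = t*·M(s). Consequently max_{s∈S} D̂(s,Δ*) = t* and j(Δ*) = t*·M/(1−γ) − (4γ‖Â‖∞/(1−γ)²)·(t*)². -/
/-!
The per-state problem is homogeneous, so `∑ₐ n Δ Â ≤ D̂(s, Δ) · M(s)` for every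
`Δ ∈ C`. With `d := max_s D̂(s, Δ)` and `c := 4γ‖Â‖∞ / (1 - γ)²` this gives
`j(Δ) ≤ d · M / (1 - γ) - c d²`, a concave quadratic in `d` whose vertex is `t*`; the vertex value
is attained by scaling a maximiser of every `M(s)` to TV size `t*`. Hence a maximiser of `j` has
`d = t*`, and all the per-state inequalities are tight because `Γ_s / T_s > 0` and `M(s) > 0`.
-/
open Finset

section PerState

variable {ι : Type*} [Fintype ι] {w A : ι → ℝ} {m : ℝ}

/-- Its greatest element is `M(s)` when `w = n_s` and `A = Â_s`. -/
def unitTVGains (w A : ι → ℝ) : Set ℝ :=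
  {y | ∃ Δ : ι → ℝ, (1 / ∑ i, w i) * ∑ i, w i * |Δ i| = 1 ∧ ∑ i, w i * Δ i = 0 ∧
    y = ∑ i, w i * Δ i * A i}

lemma sum_pos_of_isGreatest_unitTVGains (hw : ∀ i, 0 ≤ w i)
    (hm : IsGreatest (unitTVGains w A) m) : 0 < ∑ i, w i := by
  obtain ⟨Δ, hΔ, -⟩ := hm.1
  refine (sum_nonneg fun i _ => hw i).lt_of_ne fun h => ?_
  simp [← h] at hΔ

lemma gain_eq_zero_of_sum_mul_abs_eq_zero (hw : ∀ i, 0 ≤ w i) {Δ : ι → ℝ}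
    (hΔ : ∑ i, w i * |Δ i| = 0) : ∑ i, w i * Δ i * A i = 0 := by
  rw [sum_eq_zero_iff_of_nonneg fun i _ => mul_nonneg (hw i) (abs_nonneg (Δ i))] at hΔ
  refine sum_eq_zero fun i hi => ?_
  rcases mul_eq_zero.mp (hΔ i hi) with h | h <;> simp_all

lemma gain_le_tv_mul_of_isGreatest (hw : ∀ i, 0 ≤ w i) (hm : IsGreatest (unitTVGains w A) m)
    {Δ : ι → ℝ} (hΔ : ∑ i, w i * Δ i = 0) :
    ∑ i, w i * Δ i * A i ≤ ((1 / ∑ i, w i) * ∑ i, w i * |Δ i|) * m := by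
  have hT := sum_pos_of_isGreatest_unitTVGains hw hm
  have hS : 0 ≤ ∑ i, w i * |Δ i| := sum_nonneg fun i _ => mul_nonneg (hw i) (abs_nonneg (Δ i))
  rcases hS.eq_or_lt with hS | hS
  · simp [gain_eq_zero_of_sum_mul_abs_eq_zero hw hS.symm, ← hS]
  set D := (1 / ∑ i, w i) * ∑ i, w i * |Δ i| with hD
  have hDpos : 0 < D := by positivity
  have hle := hm.2 ⟨fun i => Δ i / D, ?_, ?_, rfl⟩
  · simp only [mul_div_assoc', div_mul_eq_mul_div, ← sum_div, div_le_iff₀ hDpos] at hle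
    linarith
  · simp only [abs_div, abs_of_pos hDpos, mul_div_assoc', ← sum_div]
    rw [hD]
    field_simp
  · simp [mul_div_assoc', ← sum_div, hΔ]

lemma exists_tv_eq_gain_eq_of_isGreatest (hm : IsGreatest (unitTVGains w A) m) {t : ℝ}
    (ht : 0 ≤ t) : ∃ Δ : ι → ℝ, ∑ i, w i * Δ i = 0 ∧
      (1 / ∑ i, w i) * ∑ i, w i * |Δ i| = t ∧ ∑ i, w i * Δ i * A i = t * m := by
  obtain ⟨Δ, hnorm, hsum, rfl⟩ := hm.1
  refine ⟨fun i => t * Δ i, ?_, ?_, ?_⟩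
  · simp [mul_left_comm _ t, ← mul_sum, hsum]
  · simp only [abs_mul, abs_of_nonneg ht, mul_left_comm _ t, ← mul_sum]
    rw [hnorm, mul_one]
  · simp only [mul_sum]; exact sum_congr rfl fun i _ => by ring

end PerState

lemma eq_of_le_of_sub_sq_le {c K t₀ d x : ℝ} (hc : 0 < c) (hK : K = 2 * c * t₀)
    (hx : x ≤ d * K) (h : t₀ * K - c * t₀ ^ 2 ≤ x - c * d ^ 2) : d = t₀ ∧ x = t₀ * K := by
  subst hK
  have hsq : c * (d - t₀) ^ 2 ≤ 0 := by linarith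
  have hd : d = t₀ := by
    have := le_antisymm (nonpos_of_mul_nonpos_right hsq hc) (sq_nonneg _)
    rwa [sq_eq_zero_iff, sub_eq_zero] at this
  subst hd
  exact ⟨rfl, by linarith⟩

lemma Finset.eq_of_sum_mul_eq_of_le {S : Type*} [Fintype S] {l f g : S → ℝ}
    (hl : ∀ s, 0 < l s) (hfg : ∀ s, f s ≤ g s) (h : ∑ s, l s * f s = ∑ s, l s * g s) (s : S) :
    f s = g s :=
  mul_left_cancel₀ (hl s).ne' <|
    (sum_eq_sum_iff_of_le fun s _ => mul_le_mul_of_nonneg_left (hfg s) (hl s).le).mp h s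
      (mem_univ s)

section MultiState

variable {S : Type*} [Fintype S] {X : S → Type*} [∀ s, Fintype (X s)] {w A : ∀ s, X s → ℝ}
  {m l : S → ℝ} {Δ : ∀ s, X s → ℝ}

lemma sum_mul_gain_le (hw : ∀ s i, 0 ≤ w s i)
    (hm : ∀ s, IsGreatest (unitTVGains (w s) (A s)) (m s)) (hl : ∀ s, 0 ≤ l s)
    (hm0 : ∀ s, 0 ≤ m s) (hΔ : ∀ s, ∑ i, w s i * Δ s i = 0) {d : ℝ}
    (hd : ∀ s, (1 / ∑ i, w s i) * ∑ i, w s i * |Δ s i| ≤ d) :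
    ∑ s, l s * ∑ i, w s i * Δ s i * A s i ≤ ∑ s, l s * (d * m s) :=
  sum_le_sum fun s _ => mul_le_mul_of_nonneg_left
    ((gain_le_tv_mul_of_isGreatest (hw s) (hm s) (hΔ s)).trans
      (mul_le_mul_of_nonneg_right (hd s) (hm0 s))) (hl s)

lemma tv_eq_and_gain_eq_of_sum_mul_gain_eq (hw : ∀ s i, 0 ≤ w s i)
    (hm : ∀ s, IsGreatest (unitTVGains (w s) (A s)) (m s)) (hl : ∀ s, 0 < l s)
    (hm0 : ∀ s, 0 < m s) (hΔ : ∀ s, ∑ i, w s i * Δ s i = 0) {t : ℝ}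
    (ht : ∀ s, (1 / ∑ i, w s i) * ∑ i, w s i * |Δ s i| ≤ t)
    (h : ∑ s, l s * ∑ i, w s i * Δ s i * A s i = ∑ s, l s * (t * m s)) (s : S) :
    (1 / ∑ i, w s i) * ∑ i, w s i * |Δ s i| = t ∧ ∑ i, w s i * Δ s i * A s i = t * m s := by
  have hbound s := gain_le_tv_mul_of_isGreatest (hw s) (hm s) (hΔ s)
  have hgain := Finset.eq_of_sum_mul_eq_of_le hl
    (fun s => (hbound s).trans (mul_le_mul_of_nonneg_right (ht s) (hm0 s).le)) h
  exact ⟨le_antisymm (ht s) (le_of_mul_le_mul_right (hgain s ▸ hbound s) (hm0 s)), hgain s⟩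

end MultiState

theorem stmt_4_general {S : Type} [Fintype S] [Nonempty S]
    (X : S → Type) [∀ s, Fintype (X s)]
    (n : ∀ s, X s → ℕ)
    (A : ∀ s, X s → ℝ)
    (Anorm : ℝ)
    (hApos : 0 < Anorm)
    (Γ : S → ℝ) (hΓ : ∀ s, 0 < Γ s)
    (γ : ℝ) (hγ0 : 0 < γ) (hγ1 : γ < 1)
    (M : S → ℝ)
    (hM : ∀ s, IsGreatest {y : ℝ | ∃ Δ : X s → ℝ,
        (1 / (∑ a, (n s a : ℝ))) * (∑ a, (n s a : ℝ) * |Δ a|) = 1 ∧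
        (∑ a, (n s a : ℝ) * Δ a) = 0 ∧
        y = ∑ a, (n s a : ℝ) * Δ a * A s a} (M s))
    (hMpos : ∀ s, 0 < M s) :
    let Ts : S → ℝ := fun s => ∑ a, (n s a : ℝ)
    let Γtot : ℝ := ∑ s, Γ s
    let Mtot : ℝ := (1 / Γtot) * ∑ s, (Γ s / Ts s) * M s
    let tstar : ℝ := (1 - γ) * Mtot / (8 * γ * Anorm)
    let Dhat : S → (∀ s', X s' → ℝ) → ℝ :=
      fun s Δ => (1 / Ts s) * ∑ a, (n s a : ℝ) * |Δ s a|
    let C : Set (∀ s, X s → ℝ) := {Δ | ∀ s, ∑ a, (n s a : ℝ) * Δ s a = 0}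
    let j : (∀ s, X s → ℝ) → ℝ := fun Δ =>
      (1 / ((1 - γ) * Γtot)) * ∑ s, (Γ s / Ts s) * ∑ a, (n s a : ℝ) * Δ s a * A s a
      - (4 * γ * Anorm / (1 - γ) ^ 2) *
          (Finset.univ.sup' Finset.univ_nonempty (fun s => Dhat s Δ)) ^ 2
    ∀ Δstar ∈ C, (∀ Δ' ∈ C, j Δ' ≤ j Δstar) →
      (∀ s, Dhat s Δstar = tstar ∧
        (∑ a, (n s a : ℝ) * Δstar s a * A s a) = tstar * M s) ∧
      Finset.univ.sup' Finset.univ_nonempty (fun s => Dhat s Δstar) = tstar ∧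
      j Δstar = tstar * Mtot / (1 - γ) - (4 * γ * Anorm / (1 - γ) ^ 2) * tstar ^ 2 := by
  intro Ts Γtot Mtot tstar Dhat C j Δstar hΔstar hmax
  have hn : ∀ s a, (0 : ℝ) ≤ n s a := fun _ _ => Nat.cast_nonneg _
  have hl : ∀ s, 0 < Γ s / Ts s := fun s =>
    div_pos (hΓ s) (sum_pos_of_isGreatest_unitTVGains (hn s) (hM s))
  have hΓtot : 0 < Γtot := sum_pos (fun s _ => hΓ s) univ_nonempty
  have hγ : 0 < 1 - γ := sub_pos.mpr hγ1
  have hc : 0 < 4 * γ * Anorm / (1 - γ) ^ 2 := by positivity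
  have ht : 0 < tstar := by
    have : 0 < Mtot := mul_pos (by positivity)
      (sum_pos (fun s _ => mul_pos (hl s) (hMpos s)) univ_nonempty)
    positivity
  have hK : Mtot / (1 - γ) = 2 * (4 * γ * Anorm / (1 - γ) ^ 2) * tstar := by
    simp only [tstar]
    field_simp
    ring
  have hlin : ∀ t, 1 / ((1 - γ) * Γtot) * ∑ s, Γ s / Ts s * (t * M s) = t * (Mtot / (1 - γ)) := by
    intro t
    simp only [Mtot, mul_left_comm _ t, ← mul_sum]
    field_simp
  choose Δc hΔc hDc hGc using fun s => exists_tv_eq_gain_eq_of_isGreatest (hM s) ht.le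
  have hjc : j Δc = tstar * (Mtot / (1 - γ)) - 4 * γ * Anorm / (1 - γ) ^ 2 * tstar ^ 2 := by
    have : (fun s => Dhat s Δc) = fun _ => tstar := funext hDc
    simp only [j, this, sup'_const, hGc, hlin]
  have hDle : ∀ s, Dhat s Δstar ≤ univ.sup' univ_nonempty (fun s => Dhat s Δstar) := fun s =>
    le_sup' (fun s => Dhat s Δstar) (mem_univ s)
  have hupper := (mul_le_mul_of_nonneg_left
    (sum_mul_gain_le hn hM (fun s => (hl s).le) (fun s => (hMpos s).le) hΔstar hDle)
    (by positivity : 0 ≤ 1 / ((1 - γ) * Γtot))).trans_eq (hlin _)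
  obtain ⟨hd, hLeq⟩ :=
    eq_of_le_of_sub_sq_le hc hK hupper (by rw [← hjc]; exact hmax Δc hΔc)
  have hgain := mul_left_cancel₀ (by positivity) (hLeq.trans (hlin tstar).symm)
  refine ⟨tv_eq_and_gain_eq_of_sum_mul_gain_eq hn hM hl hMpos hΔstar (hd ▸ hDle) hgain, hd, ?_⟩
  simp only [j]
  rw [hLeq, hd]
  ring

/-- any maximizer Δ* of the reduced sample-based TV-TRPO
objective j over the zero-sum set C equalizes the per-state TV divergence at
t*, attains value t*·M(s) per state, and j(Δ*) takes the closed form. -/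
theorem stmt_4 {S : Type} [Fintype S] [Nonempty S]
    (X : S → Type) [∀ s, Fintype (X s)]
    (hX : ∀ s, 2 ≤ Fintype.card (X s))
    (n : ∀ s, X s → ℕ) (hn : ∀ s a, 1 ≤ n s a)
    (A : ∀ s, X s → ℝ)
    (Anorm : ℝ) (hA : IsGreatest {x : ℝ | ∃ s, ∃ a : X s, x = |A s a|} Anorm)
    (hApos : 0 < Anorm)
    (Γ : S → ℝ) (hΓ : ∀ s, 0 < Γ s)
    (γ : ℝ) (hγ0 : 0 < γ) (hγ1 : γ < 1)
    (M : S → ℝ)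
    (hM : ∀ s, IsGreatest {y : ℝ | ∃ Δ : X s → ℝ,
        (1 / (∑ a, (n s a : ℝ))) * (∑ a, (n s a : ℝ) * |Δ a|) = 1 ∧
        (∑ a, (n s a : ℝ) * Δ a) = 0 ∧
        y = ∑ a, (n s a : ℝ) * Δ a * A s a} (M s))
    (hMpos : ∀ s, 0 < M s) :
    let Ts : S → ℝ := fun s => ∑ a, (n s a : ℝ)
    let Γtot : ℝ := ∑ s, Γ s
    let Mtot : ℝ := (1 / Γtot) * ∑ s, (Γ s / Ts s) * M s
    let tstar : ℝ := (1 - γ) * Mtot / (8 * γ * Anorm)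
    let Dhat : S → (∀ s', X s' → ℝ) → ℝ :=
      fun s Δ => (1 / Ts s) * ∑ a, (n s a : ℝ) * |Δ s a|
    let C : Set (∀ s, X s → ℝ) := {Δ | ∀ s, ∑ a, (n s a : ℝ) * Δ s a = 0}
    let j : (∀ s, X s → ℝ) → ℝ := fun Δ =>
      (1 / ((1 - γ) * Γtot)) * ∑ s, (Γ s / Ts s) * ∑ a, (n s a : ℝ) * Δ s a * A s a
      - (4 * γ * Anorm / (1 - γ) ^ 2) *
          (Finset.univ.sup' Finset.univ_nonempty (fun s => Dhat s Δ)) ^ 2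
    ∀ Δstar ∈ C, (∀ Δ' ∈ C, j Δ' ≤ j Δstar) →
      (∀ s, Dhat s Δstar = tstar ∧
        (∑ a, (n s a : ℝ) * Δstar s a * A s a) = tstar * M s) ∧
      Finset.univ.sup' Finset.univ_nonempty (fun s => Dhat s Δstar) = tstar ∧
      j Δstar = tstar * Mtot / (1 - γ) - (4 * γ * Anorm / (1 - γ) ^ 2) * tstar ^ 2 :=
  stmt_4_general X n A Anorm hApos Γ hΓ γ hγ0 hγ1 M hM hMpos
end

section
/- Assume M(s) > 0 for every s ∈ S. Then for every δ > 0: if Δ* ∈ C maximizes j^APC(·, δ) over C (i.e., j^APC(Δ', δ) ≤ j^APC(Δ*, δ) for every Δ' ∈ C), then D̂(s, Δ*) ≤ δ for every s ∈ S. That is, any maximizer of the surrogated APC-Obj objective automatically satisfies the per-state TV trust-region constraint of radius δ, even though the optimization is unconstrained apart from the zero-sum condition. -/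
/-!
Suppose `D̂(s, Δ*) = D > δ` and put `T = T_s`, `ε = T (D - δ) > 0`. The clipping bound at `s` is
`|Δ*_{s,a}| - ε`, so each clipped ratio `c_a` is `Δ*_{s,a}` pulled towards `0` by `ε`. Since
`Δ*_s` is zero-sum, its positive and negative parts each have weighted mass `T D / 2`, and the
clipped ones therefore less than `T δ / 2`. The state-`s` summand of `j^APC` equals
`Σ n_a (c_a - 𝒞_s) A_a + Σ n_a A_a`; the centred vector `c - 𝒞_s` is zero-sum with divergence
below `δ`, so rescaling it into `F_s` bounds that summand by `< δ M(s) + Σ n_a A_a`. Replacing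
`Δ*_s` by `δ` times a maximiser of `M(s)` attains exactly this value and leaves the other states
alone, contradicting the maximality of `Δ*`.
-/

open Finset

namespace APC

variable {ι : Type*} [Fintype ι]

lemma sum_lt_sum_update {S : Type*} [Fintype S] [DecidableEq S] {X : S → Type*}
    (f : ∀ s, X s → ℝ) (x : ∀ s, X s) {s : S} {y : X s} (h : f s (x s) < f s y) :
    ∑ t, f t (x t) < ∑ t, f t (Function.update x s y t) := by
  refine sum_lt_sum (fun t _ => ?_) ⟨s, mem_univ s, by simpa using h⟩
  rcases eq_or_ne t s with rfl | ht
  · simpa using h.le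
  · simp [ht]

def clip (x B : ℝ) : ℝ := max (-(max B 0)) (min x (max B 0))

lemma clip_abs_self (x : ℝ) : clip x |x| = x := by
  rw [clip, max_eq_left (abs_nonneg x), min_eq_left (le_abs_self x), max_eq_right (neg_abs_le x)]

lemma posPart_clip_le (x : ℝ) {ε : ℝ} (hε : 0 ≤ ε) : (clip x (|x| - ε))⁺ ≤ (x⁺ - ε)⁺ := by
  simp only [clip, posPart_def]
  rcases le_total 0 x with h | h
  · rw [abs_of_nonneg h]; simp only [max_def, min_def]; split_ifs <;> linarith
  · rw [abs_of_nonpos h]; simp only [max_def, min_def]; split_ifs <;> linarith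

lemma negPart_clip_le (x : ℝ) {ε : ℝ} (hε : 0 ≤ ε) : (clip x (|x| - ε))⁻ ≤ (x⁻ - ε)⁺ := by
  simp only [clip, posPart_def, negPart_def]
  rcases le_total 0 x with h | h
  · rw [abs_of_nonneg h]; simp only [max_def, min_def]; split_ifs <;> linarith
  · rw [abs_of_nonpos h]; simp only [max_def, min_def]; split_ifs <;> linarith

-- Some entry above `ε` with a nonzero, hence `≥ 1`, weight pays for the whole `ε`.
lemma sum_mul_posPart_sub_le (n : ι → ℕ) {w : ι → ℝ} (hw : ∀ a, 0 ≤ w a) {ε : ℝ} (hε : 0 ≤ ε) :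
    ∑ a, (n a : ℝ) * (w a - ε)⁺ ≤ (∑ a, (n a : ℝ) * w a - ε)⁺ := by
  classical
  by_cases h : ∃ a, n a ≠ 0 ∧ ε < w a
  · obtain ⟨a₀, hn₀, hw₀⟩ := h
    have hn₀ : (1 : ℝ) ≤ n a₀ := by exact_mod_cast Nat.one_le_iff_ne_zero.mpr hn₀
    have hterm : ∀ a, (n a : ℝ) * (w a - ε)⁺ ≤ n a * w a := fun a =>
      mul_le_mul_of_nonneg_left (sup_le (by linarith) (hw a)) (Nat.cast_nonneg _)
    refine le_trans ?_ (le_posPart _)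
    rw [← add_sum_erase _ _ (mem_univ a₀), ← add_sum_erase _ _ (mem_univ a₀),
      posPart_eq_self.mpr (by linarith)]
    linarith [sum_le_sum fun a (_ : a ∈ univ.erase a₀) => hterm a,
      mul_le_mul_of_nonneg_right hn₀ hε]
  · push Not at h
    refine le_trans (le_of_eq (sum_eq_zero fun a _ => ?_)) (posPart_nonneg _)
    rcases eq_or_ne (n a) 0 with hn | hn
    · simp [hn]
    · simp [posPart_eq_zero.mpr (sub_nonpos.mpr (h a hn))]

section Weighted

variable {μ w : ι → ℝ}

lemma sum_mul_posPart_and_negPart_eq_half (h : ∑ a, μ a * w a = 0) :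
    ∑ a, μ a * (w a)⁺ = (∑ a, μ a * |w a|) / 2 ∧ ∑ a, μ a * (w a)⁻ = (∑ a, μ a * |w a|) / 2 := by
  have habs : ∑ a, μ a * |w a| = ∑ a, μ a * (w a)⁺ + ∑ a, μ a * (w a)⁻ := by
    rw [← sum_add_distrib]; simp only [← mul_add, posPart_add_negPart]
  have hw : ∑ a, μ a * w a = ∑ a, μ a * (w a)⁺ - ∑ a, μ a * (w a)⁻ := by
    rw [← sum_sub_distrib]; simp only [← mul_sub, posPart_sub_negPart]
  constructor <;> linarith

-- Shifting down by `m ≥ 0` only shrinks positive parts, shifting up only negative ones; and for a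
-- centred vector either part alone carries half the absolute mass.
lemma sum_mul_abs_sub_le (hμ : ∀ a, 0 ≤ μ a) {m p : ℝ} (hm : ∑ a, μ a * (w a - m) = 0)
    (hpos : ∑ a, μ a * (w a)⁺ ≤ p) (hneg : ∑ a, μ a * (w a)⁻ ≤ p) :
    ∑ a, μ a * |w a - m| ≤ 2 * p := by
  obtain ⟨hhalf₁, hhalf₂⟩ := sum_mul_posPart_and_negPart_eq_half hm
  rcases le_total 0 m with h | h
  · have : ∑ a, μ a * (w a - m)⁺ ≤ ∑ a, μ a * (w a)⁺ := sum_le_sum fun a _ =>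
      mul_le_mul_of_nonneg_left (posPart_mono (by linarith)) (hμ a)
    linarith
  · have : ∑ a, μ a * (w a - m)⁻ ≤ ∑ a, μ a * (w a)⁻ := sum_le_sum fun a _ =>
      mul_le_mul_of_nonneg_left (negPart_anti (by linarith)) (hμ a)
    linarith

end Weighted

noncomputable section

def empiricalTV (n : ι → ℕ) (v : ι → ℝ) : ℝ := 1 / (∑ a, (n a : ℝ)) * ∑ a, (n a : ℝ) * |v a|

-- `M(s)` of the paper is the greatest element of `unitTVGains (n s) (A s)`.
def unitTVGains (n : ι → ℕ) (A : ι → ℝ) : Set ℝ :=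
  {y | ∃ u : ι → ℝ, empiricalTV n u = 1 ∧ ∑ a, (n a : ℝ) * u a = 0 ∧
    y = ∑ a, (n a : ℝ) * u a * A a}

def clipped (n : ι → ℕ) (δ : ℝ) (v : ι → ℝ) (a : ι) : ℝ :=
  clip (v a) ((∑ b, (n b : ℝ)) * (δ - empiricalTV n v) + |v a|)

def clippedMean (n : ι → ℕ) (δ : ℝ) (v : ι → ℝ) : ℝ :=
  1 / (∑ a, (n a : ℝ)) * ∑ a, (n a : ℝ) * clipped n δ v a

-- The inner sum over actions of `j^APC` at one state; `clippedMean` is `𝒞_s`.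
def stateObjective (n : ι → ℕ) (A : ι → ℝ) (δ : ℝ) (v : ι → ℝ) : ℝ :=
  ∑ a, (n a : ℝ) * (clipped n δ v a * A a + (1 - clippedMean n δ v) * A a)

variable {n : ι → ℕ} {A u v : ι → ℝ} {δ M : ℝ}

lemma sum_weight_pos_of_empiricalTV_pos (h : 0 < empiricalTV n v) : 0 < ∑ a, (n a : ℝ) := by
  refine (sum_nonneg fun a _ => Nat.cast_nonneg (n a)).lt_of_ne fun h0 => ?_
  simp [empiricalTV, ← h0] at h

lemma empiricalTV_smul (c : ℝ) (v : ι → ℝ) : empiricalTV n (c • v) = |c| * empiricalTV n v := by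
  simp only [empiricalTV, Pi.smul_apply, smul_eq_mul, abs_mul, mul_left_comm _ |c|, ← mul_sum]

lemma sum_mul_le_empiricalTV_mul (hv : ∑ a, (n a : ℝ) * v a = 0)
    (hM : M ∈ upperBounds (unitTVGains n A)) :
    ∑ a, (n a : ℝ) * v a * A a ≤ empiricalTV n v * M := by
  rcases (show 0 ≤ empiricalTV n v by unfold empiricalTV; positivity).eq_or_lt with h0 | hpos
  · have hzero : ∀ a, (n a : ℝ) * v a = 0 := by
      rcases mul_eq_zero.mp h0.symm with hT | hS
      · have := (sum_eq_zero_iff_of_nonneg fun a _ => Nat.cast_nonneg (n a)).mp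
          (eq_zero_of_one_div_eq_zero hT)
        simp [this]
      · have := (sum_eq_zero_iff_of_nonneg fun a _ => by positivity).mp hS
        intro a
        simpa using this a (mem_univ a)
    simp [hzero, ← h0]
  · set r := empiricalTV n v
    have hu : ∑ a, (n a : ℝ) * (r⁻¹ • v) a * A a ≤ M := by
      refine hM ⟨r⁻¹ • v, ?_, ?_, rfl⟩
      · rw [empiricalTV_smul, abs_inv, abs_of_pos hpos, inv_mul_cancel₀ hpos.ne']
      · simp only [Pi.smul_apply, smul_eq_mul, mul_left_comm _ r⁻¹, ← mul_sum, hv, mul_zero]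
    simp only [Pi.smul_apply, smul_eq_mul, mul_left_comm _ r⁻¹, mul_assoc, ← mul_sum] at hu
    rw [inv_mul_le_iff₀ hpos] at hu
    simpa only [mul_assoc] using hu

lemma stateObjective_eq (n : ι → ℕ) (A : ι → ℝ) (δ : ℝ) (v : ι → ℝ) :
    stateObjective n A δ v =
      ∑ a, (n a : ℝ) * (clipped n δ v a - clippedMean n δ v) * A a + ∑ a, (n a : ℝ) * A a := by
  unfold stateObjective
  rw [← sum_add_distrib]
  exact sum_congr rfl fun a _ => by ring

lemma sum_mul_clipped_sub_clippedMean_eq_zero (hT : ∑ a, (n a : ℝ) ≠ 0) :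
    ∑ a, (n a : ℝ) * (clipped n δ v a - clippedMean n δ v) = 0 := by
  simp only [mul_sub, sum_sub_distrib, ← sum_mul, clippedMean]
  field_simp
  ring

lemma clipped_of_empiricalTV_eq (h : empiricalTV n v = δ) : clipped n δ v = v := by
  ext a
  rw [clipped, h, sub_self, mul_zero, zero_add, clip_abs_self]

lemma stateObjective_of_empiricalTV_eq (h : empiricalTV n v = δ)
    (hv : ∑ a, (n a : ℝ) * v a = 0) :
    stateObjective n A δ v = ∑ a, (n a : ℝ) * v a * A a + ∑ a, (n a : ℝ) * A a := by
  have hm : clippedMean n δ v = 0 := by rw [clippedMean, clipped_of_empiricalTV_eq h, hv, mul_zero]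
  rw [stateObjective_eq, hm, clipped_of_empiricalTV_eq h]
  simp only [sub_zero]

lemma stateObjective_smul (hu1 : empiricalTV n u = 1) (hu0 : ∑ a, (n a : ℝ) * u a = 0)
    (hδ : 0 ≤ δ) :
    stateObjective n A δ (δ • u) = δ * ∑ a, (n a : ℝ) * u a * A a + ∑ a, (n a : ℝ) * A a := by
  have hsum (f : ι → ℝ) :
      ∑ a, (n a : ℝ) * (δ • u) a * f a = δ * ∑ a, (n a : ℝ) * u a * f a := by
    rw [mul_sum]
    exact sum_congr rfl fun a _ => by simp only [Pi.smul_apply, smul_eq_mul]; ring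
  rw [stateObjective_of_empiricalTV_eq, hsum]
  · rw [empiricalTV_smul, abs_of_nonneg hδ, hu1, mul_one]
  · simpa [hu0] using hsum 1

-- With `ε = T (D̂ - δ)` the clipping bound is `|v a| - ε`, so the clipped positive and negative
-- masses drop from `T D̂ / 2` to `T δ - T D̂ / 2 < T δ / 2`.
lemma empiricalTV_clipped_sub_clippedMean_lt (hv : ∑ a, (n a : ℝ) * v a = 0) (hδ : 0 < δ)
    (hδv : δ < empiricalTV n v) :
    empiricalTV n (fun a => clipped n δ v a - clippedMean n δ v) < δ := by
  set T := ∑ a, (n a : ℝ)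
  set D := empiricalTV n v
  set c := clipped n δ v
  have hT : 0 < T := sum_weight_pos_of_empiricalTV_pos (hδ.trans hδv)
  set ε := T * (D - δ)
  have hε : 0 ≤ ε := mul_nonneg hT.le (by linarith)
  have hc : ∀ a, c a = clip (v a) (|v a| - ε) := fun a => by
    simp only [c, clipped]; congr 1; ring
  have habs : ∑ a, (n a : ℝ) * |v a| = T * D := by
    simp only [D, empiricalTV]
    rw [← mul_assoc, mul_one_div_cancel hT.ne', one_mul]
  obtain ⟨hpos, hneg⟩ := sum_mul_posPart_and_negPart_eq_half hv
  have hcpos : ∑ a, (n a : ℝ) * (c a)⁺ ≤ (T * D / 2 - ε)⁺ := calc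
    _ ≤ ∑ a, (n a : ℝ) * ((v a)⁺ - ε)⁺ := sum_le_sum fun a _ =>
        mul_le_mul_of_nonneg_left (hc a ▸ posPart_clip_le _ hε) (Nat.cast_nonneg _)
    _ ≤ (∑ a, (n a : ℝ) * (v a)⁺ - ε)⁺ := sum_mul_posPart_sub_le n (fun a => posPart_nonneg _) hε
    _ = _ := by rw [hpos, habs]
  have hcneg : ∑ a, (n a : ℝ) * (c a)⁻ ≤ (T * D / 2 - ε)⁺ := calc
    _ ≤ ∑ a, (n a : ℝ) * ((v a)⁻ - ε)⁺ := sum_le_sum fun a _ =>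
        mul_le_mul_of_nonneg_left (hc a ▸ negPart_clip_le _ hε) (Nat.cast_nonneg _)
    _ ≤ (∑ a, (n a : ℝ) * (v a)⁻ - ε)⁺ := sum_mul_posPart_sub_le n (fun a => negPart_nonneg _) hε
    _ = _ := by rw [hneg, habs]
  have hmass : (T * D / 2 - ε)⁺ < T * δ / 2 := posPart_lt.mpr ⟨by nlinarith, by positivity⟩
  have := sum_mul_abs_sub_le (fun a => Nat.cast_nonneg (n a))
    (sum_mul_clipped_sub_clippedMean_eq_zero hT.ne') hcpos hcneg
  rw [empiricalTV, one_div_mul_eq_div, div_lt_iff₀ hT]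
  linarith

lemma stateObjective_lt (hv : ∑ a, (n a : ℝ) * v a = 0) (hδ : 0 < δ)
    (hδv : δ < empiricalTV n v) (hM : M ∈ upperBounds (unitTVGains n A)) (hMpos : 0 < M) :
    stateObjective n A δ v < δ * M + ∑ a, (n a : ℝ) * A a := by
  have hT : 0 < ∑ a, (n a : ℝ) := sum_weight_pos_of_empiricalTV_pos (hδ.trans hδv)
  rw [stateObjective_eq]
  gcongr
  calc _ ≤ empiricalTV n (fun a => clipped n δ v a - clippedMean n δ v) * M :=
        sum_mul_le_empiricalTV_mul (sum_mul_clipped_sub_clippedMean_eq_zero hT.ne') hM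
    _ < δ * M := mul_lt_mul_of_pos_right (empiricalTV_clipped_sub_clippedMean_lt hv hδ hδv) hMpos

end

end APC

open APC

theorem stmt_6_general {S : Type} [Fintype S]
    (X : S → Type) [∀ s, Fintype (X s)]
    (n : ∀ s, X s → ℕ)
    (A : ∀ s, X s → ℝ)
    (Γ : S → ℝ) (hΓ : ∀ s, 0 < Γ s)
    (γ : ℝ) (hγ1 : γ < 1)
    (M : S → ℝ)
    (hM : ∀ s, IsGreatest {y : ℝ | ∃ Δ : X s → ℝ,
        (1 / (∑ a, (n s a : ℝ))) * (∑ a, (n s a : ℝ) * |Δ a|) = 1 ∧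
        (∑ a, (n s a : ℝ) * Δ a) = 0 ∧
        y = ∑ a, (n s a : ℝ) * Δ a * A s a} (M s))
    (hMpos : ∀ s, 0 < M s) :
    let Ts : S → ℝ := fun s => ∑ a, (n s a : ℝ)
    let Γtot : ℝ := ∑ s, Γ s
    let Dhat : S → (∀ s', X s' → ℝ) → ℝ :=
      fun s Δ => (1 / Ts s) * ∑ a, (n s a : ℝ) * |Δ s a|
    let C : Set (∀ s, X s → ℝ) := {Δ | ∀ s, ∑ a, (n s a : ℝ) * Δ s a = 0}
    let clip : ℝ → ℝ → ℝ := fun x B => max (-(max B 0)) (min x (max B 0))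
    let Cs : S → (∀ s', X s' → ℝ) → ℝ → ℝ := fun s Δ δ =>
      (1 / Ts s) * ∑ a, (n s a : ℝ) * clip (Δ s a) (Ts s * (δ - Dhat s Δ) + |Δ s a|)
    let jAPC : (∀ s, X s → ℝ) → ℝ → ℝ := fun Δ δ =>
      (1 / ((1 - γ) * Γtot)) * ∑ s, (Γ s / Ts s) * ∑ a, (n s a : ℝ) *
        (clip (Δ s a) (Ts s * (δ - Dhat s Δ) + |Δ s a|) * A s a + (1 - Cs s Δ δ) * A s a)
    ∀ δ : ℝ, 0 < δ → ∀ Δstar ∈ C, (∀ Δ' ∈ C, jAPC Δ' δ ≤ jAPC Δstar δ) →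
      ∀ s, Dhat s Δstar ≤ δ := by
  intro Ts Γtot Dhat C clip Cs jAPC δ hδ Δstar hΔstar hmax s
  by_contra! hs
  classical
  obtain ⟨u, hu1, hu0, hMu⟩ := (hM s).1
  set Δ' := Function.update Δstar s (δ • u)
  have hΔ' : Δ' ∈ C := fun t => by
    rcases eq_or_ne t s with rfl | ht
    · simp [Δ', mul_left_comm _ δ, ← mul_sum, hu0]
    · simpa [Δ', ht] using hΔstar t
  have hgain : stateObjective (n s) (A s) δ (Δstar s) < stateObjective (n s) (A s) δ (δ • u) := by
    rw [stateObjective_smul hu1 hu0 hδ.le, ← hMu]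
    exact stateObjective_lt (hΔstar s) hδ hs (hM s).2 (hMpos s)
  have hT : 0 < Ts s := sum_weight_pos_of_empiricalTV_pos (hδ.trans hs)
  have hcoef : 0 < 1 / ((1 - γ) * Γtot) :=
    one_div_pos.mpr (mul_pos (by linarith) (sum_pos (fun t _ => hΓ t) ⟨s, mem_univ s⟩))
  have hlt : jAPC Δstar δ < jAPC Δ' δ := by
    change 1 / ((1 - γ) * Γtot) * ∑ t, Γ t / Ts t * stateObjective (n t) (A t) δ (Δstar t) <
      1 / ((1 - γ) * Γtot) * ∑ t, Γ t / Ts t * stateObjective (n t) (A t) δ (Δ' t)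
    exact mul_lt_mul_of_pos_left (sum_lt_sum_update
      (fun t v => Γ t / Ts t * stateObjective (n t) (A t) δ v) Δstar
      (mul_lt_mul_of_pos_left hgain (div_pos (hΓ s) hT))) hcoef
  exact (hmax Δ' hΔ').not_gt hlt

/-- any maximizer of the surrogated APC-Obj objective over the
zero-sum set automatically satisfies the per-state TV trust-region
constraint of radius δ. -/
theorem stmt_6 {S : Type} [Fintype S] [Nonempty S]
    (X : S → Type) [∀ s, Fintype (X s)]
    (hX : ∀ s, 2 ≤ Fintype.card (X s))
    (n : ∀ s, X s → ℕ) (hn : ∀ s a, 1 ≤ n s a)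
    (A : ∀ s, X s → ℝ)
    (Anorm : ℝ) (hA : IsGreatest {x : ℝ | ∃ s, ∃ a : X s, x = |A s a|} Anorm)
    (hApos : 0 < Anorm)
    (Γ : S → ℝ) (hΓ : ∀ s, 0 < Γ s)
    (γ : ℝ) (hγ0 : 0 < γ) (hγ1 : γ < 1)
    (M : S → ℝ)
    (hM : ∀ s, IsGreatest {y : ℝ | ∃ Δ : X s → ℝ,
        (1 / (∑ a, (n s a : ℝ))) * (∑ a, (n s a : ℝ) * |Δ a|) = 1 ∧
        (∑ a, (n s a : ℝ) * Δ a) = 0 ∧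
        y = ∑ a, (n s a : ℝ) * Δ a * A s a} (M s))
    (hMpos : ∀ s, 0 < M s) :
    let Ts : S → ℝ := fun s => ∑ a, (n s a : ℝ)
    let Γtot : ℝ := ∑ s, Γ s
    let Dhat : S → (∀ s', X s' → ℝ) → ℝ :=
      fun s Δ => (1 / Ts s) * ∑ a, (n s a : ℝ) * |Δ s a|
    let C : Set (∀ s, X s → ℝ) := {Δ | ∀ s, ∑ a, (n s a : ℝ) * Δ s a = 0}
    let clip : ℝ → ℝ → ℝ := fun x B => max (-(max B 0)) (min x (max B 0))
    let Cs : S → (∀ s', X s' → ℝ) → ℝ → ℝ := fun s Δ δ =>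
      (1 / Ts s) * ∑ a, (n s a : ℝ) * clip (Δ s a) (Ts s * (δ - Dhat s Δ) + |Δ s a|)
    let jAPC : (∀ s, X s → ℝ) → ℝ → ℝ := fun Δ δ =>
      (1 / ((1 - γ) * Γtot)) * ∑ s, (Γ s / Ts s) * ∑ a, (n s a : ℝ) *
        (clip (Δ s a) (Ts s * (δ - Dhat s Δ) + |Δ s a|) * A s a + (1 - Cs s Δ δ) * A s a)
    ∀ δ : ℝ, 0 < δ → ∀ Δstar ∈ C, (∀ Δ' ∈ C, jAPC Δ' δ ≤ jAPC Δstar δ) →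
      ∀ s, Dhat s Δstar ≤ δ :=
  stmt_6_general X n A Γ hΓ γ hγ1 M hM hMpos
end

section
/- Assume M(s) > 0 for every s ∈ S, and set δ^APC := t* = (1−γ)·M/(8γ·‖Â‖∞) (which is then positive). Then for every Δ ∈ C: Δ maximizes j^APC(·, δ^APC) over C if and only if Δ maximizes j over C. Moreover, the common set of maximizers is exactly { Δ ∈ C : for every s ∈ S, D̂(s,Δ) = t* and Σ_{a∈X_s} n_{s,a} Δ_{s,a} Â_{s,a} = t*·M(s) }; in particular the unconstrained clipping-based APC-Obj objective and the penalized sample-based TV-TRPO objective produce the same set of updates. -/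
/-!
Fix a state and write `V(Δ) = ∑ n Δ Â` for its advantage value. On zero-sum vectors `V` is
positively homogeneous with `D̂` as normalization, so `V(Δ) ≤ D̂(Δ) · M(s)`.

For `j`, this bounds the linear part by `t ∑ (Γ_s/T_s) M(s)` with `t = max_s D̂`, and the
resulting concave parabola in `t` peaks exactly at `t*`. For `j^APC`, each state contributes
`V(clip − 𝒞_s) + ∑ n Â`, where `clip − 𝒞_s` is again zero-sum: if `D̂ ≤ δ` nothing is clipped
and `𝒞_s = 0`, while if `D̂ > δ` the clip is a soft threshold that pushes the divergence of the
re-centred vector strictly below `δ`, so the state loses value. Both objectives are therefore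
maximal exactly when every state has `D̂ = t*` and `V = t* M(s)`, which scaling the maximizers of
`M(s)` by `t*` achieves.
-/

open Finset

namespace SampleTV

section Weights

variable {α : Type*} [Fintype α]

lemma sum_mul_abs_eq_two_mul_sum_mul_max {w v : α → ℝ} (hv : ∑ a, w a * v a = 0) :
    ∑ a, w a * |v a| = 2 * ∑ a, w a * max (v a) 0 := by
  have h a : w a * |v a| = 2 * (w a * max (v a) 0) - w a * v a := by
    linear_combination (-w a) * max_zero_add_max_neg_zero_eq_abs_self (v a)
      - w a * max_zero_sub_max_neg_zero_eq_self (v a)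
  rw [sum_congr rfl fun a _ => h a, sum_sub_distrib, hv, mul_sum, sub_zero]

lemma min_sum_mul_le_sum_mul_min {w x : α → ℝ} {u : ℝ} (hw : ∀ a, 1 ≤ w a)
    (hx : ∀ a, 0 ≤ x a) (hu : 0 ≤ u) :
    min (∑ a, w a * x a) u ≤ ∑ a, w a * min (x a) u := by
  by_cases h : ∃ a, u ≤ x a
  · obtain ⟨a, ha⟩ := h
    calc min (∑ a, w a * x a) u ≤ w a * min (x a) u := by
          rw [min_eq_right ha]; nlinarith [min_le_right (∑ a, w a * x a) u, hw a]
      _ ≤ ∑ a, w a * min (x a) u :=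
          single_le_sum (fun b _ => mul_nonneg (by linarith [hw b]) (le_min (hx b) hu))
            (mem_univ a)
  · push Not at h
    calc min (∑ a, w a * x a) u ≤ ∑ a, w a * x a := min_le_left _ _
      _ = ∑ a, w a * min (x a) u := sum_congr rfl fun a _ => by rw [min_eq_left (h a).le]

lemma two_mul_sum_mul_max_sub_lt {w v : α → ℝ} {u : ℝ} (hw : ∀ a, 1 ≤ w a)
    (hv : ∑ a, w a * v a = 0) (hu : 0 < u) (hlt : u < ∑ a, w a * |v a|) :
    2 * ∑ a, w a * max (v a - u) 0 < ∑ a, w a * |v a| - u := by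
  have hsplit : ∑ a, w a * max (v a - u) 0
      = ∑ a, w a * max (v a) 0 - ∑ a, w a * min (max (v a) 0) u := by
    rw [← sum_sub_distrib]
    exact sum_congr rfl fun a _ => by
      rw [← mul_sub]; congr 1; grind
  have hmin := min_sum_mul_le_sum_mul_min hw (fun a => le_max_right (v a) 0) hu.le
  rw [sum_mul_abs_eq_two_mul_sum_mul_max hv] at hlt ⊢
  rcases min_cases (∑ a, w a * max (v a) 0) u with ⟨h, -⟩ | ⟨h, -⟩ <;> linarith

lemma sum_mul_sub_eq_zero {w : α → ℝ} (hw : ∑ a, w a ≠ 0) (v : α → ℝ) :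
    ∑ a, w a * (v a - (1 / ∑ b, w b) * ∑ b, w b * v b) = 0 := by
  simp only [mul_sub, sum_sub_distrib, ← sum_mul]
  field_simp
  ring

end Weights

section State

variable {α : Type*} [Fintype α] (w : α → ℝ)

/-- The sample estimate `D̂` of the total-variation distance. -/
noncomputable def tvDist (Δ : α → ℝ) : ℝ := (1 / ∑ a, w a) * ∑ a, w a * |Δ a|

def advValue (A Δ : α → ℝ) : ℝ := ∑ a, w a * Δ a * A a

def unitAdvValues (A : α → ℝ) : Set ℝ :=
  {y | ∃ Δ : α → ℝ, tvDist w Δ = 1 ∧ ∑ a, w a * Δ a = 0 ∧ y = advValue w A Δ}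

variable {w}

lemma tvDist_nonneg (hw : ∀ a, 0 ≤ w a) (Δ : α → ℝ) : 0 ≤ tvDist w Δ :=
  mul_nonneg (one_div_nonneg.2 (sum_nonneg fun a _ => hw a))
    (sum_nonneg fun a _ => mul_nonneg (hw a) (abs_nonneg _))

lemma sum_pos_of_tvDist_ne_zero (hw : ∀ a, 0 ≤ w a) {Δ : α → ℝ} (h : tvDist w Δ ≠ 0) :
    0 < ∑ a, w a :=
  (sum_nonneg fun a _ => hw a).lt_of_ne' fun h0 => h (by simp [tvDist, h0])

lemma mul_tvDist (hw : ∑ a, w a ≠ 0) (Δ : α → ℝ) :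
    (∑ a, w a) * tvDist w Δ = ∑ a, w a * |Δ a| := by
  rw [tvDist, ← mul_assoc, mul_one_div_cancel hw, one_mul]

lemma tvDist_const_mul {t : ℝ} (ht : 0 ≤ t) (Δ : α → ℝ) :
    tvDist w (fun a => t * Δ a) = t * tvDist w Δ := by
  simp only [tvDist, abs_mul, abs_of_nonneg ht, mul_left_comm (w _) t, ← mul_sum]
  ring

lemma tvDist_neg (Δ : α → ℝ) : tvDist w (fun a => -Δ a) = tvDist w Δ := by
  simp only [tvDist, abs_neg]

lemma advValue_const_mul (A Δ : α → ℝ) (t : ℝ) :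
    advValue w A (fun a => t * Δ a) = t * advValue w A Δ := by
  simp only [advValue, mul_sum]
  exact sum_congr rfl fun a _ => by ring

lemma advValue_eq_zero_of_tvDist_eq_zero (hw : ∀ a, 0 ≤ w a) (A : α → ℝ) {Δ : α → ℝ}
    (h : tvDist w Δ = 0) : advValue w A Δ = 0 := by
  have hzero a : w a * Δ a = 0 := by
    rcases mul_eq_zero.1 h with hT | hS
    · rw [one_div, inv_eq_zero, sum_eq_zero_iff_of_nonneg fun b _ => hw b] at hT
      rw [hT a (mem_univ a), zero_mul]
    · rw [sum_eq_zero_iff_of_nonneg fun b _ => mul_nonneg (hw b) (abs_nonneg _)] at hS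
      rw [← abs_eq_zero, abs_mul, abs_of_nonneg (hw a)]
      exact hS a (mem_univ a)
  simp [advValue, hzero]

lemma advValue_le_tvDist_mul (hw : ∀ a, 0 ≤ w a) {A : α → ℝ} {M : ℝ}
    (hM : M ∈ upperBounds (unitAdvValues w A)) {Δ : α → ℝ} (hΔ : ∑ a, w a * Δ a = 0) :
    advValue w A Δ ≤ tvDist w Δ * M := by
  rcases (tvDist_nonneg hw Δ).eq_or_lt with h0 | hpos
  · rw [advValue_eq_zero_of_tvDist_eq_zero hw A h0.symm, ← h0, zero_mul]
  · set d := tvDist w Δ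
    have hunit : tvDist w (fun a => d⁻¹ * Δ a) = 1 := by
      rw [tvDist_const_mul (inv_nonneg.2 hpos.le), inv_mul_cancel₀ hpos.ne']
    have hzero : ∑ a, w a * (d⁻¹ * Δ a) = 0 := by
      simp only [mul_left_comm (w _) d⁻¹, ← mul_sum, hΔ, mul_zero]
    have := hM ⟨_, hunit, hzero, rfl⟩
    rwa [advValue_const_mul, inv_mul_le_iff₀ hpos] at this

lemma exists_tvDist_eq_advValue_eq {A : α → ℝ} {M : ℝ} (hM : IsGreatest (unitAdvValues w A) M)
    {t : ℝ} (ht : 0 ≤ t) :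
    ∃ Δ : α → ℝ, ∑ a, w a * Δ a = 0 ∧ tvDist w Δ = t ∧ advValue w A Δ = t * M := by
  obtain ⟨Δ, hunit, hzero, rfl⟩ := hM.1
  refine ⟨fun a => t * Δ a, ?_, ?_, advValue_const_mul A Δ t⟩
  · simp only [mul_left_comm (w _) t, ← mul_sum, hzero, mul_zero]
  · rw [tvDist_const_mul ht, hunit, mul_one]

end State

/-- `clip(x, ±B)`; a negative bound `B` clips everything to `0`. -/
def clipSym (x B : ℝ) : ℝ := max (-max B 0) (min x (max B 0))

lemma clipSym_of_abs_le {x B : ℝ} (h : |x| ≤ B) : clipSym x B = x := by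
  unfold clipSym; grind

lemma clipSym_neg (x B : ℝ) : clipSym (-x) B = -clipSym x B := by
  unfold clipSym; grind

lemma clipSym_abs_sub_le {u : ℝ} (hu : 0 ≤ u) (x : ℝ) : clipSym x (|x| - u) ≤ max (x - u) 0 := by
  unfold clipSym; grind

section APC

variable {α : Type*} [Fintype α] (w : α → ℝ)

noncomputable def apcClip (δ : ℝ) (Δ : α → ℝ) (a : α) : ℝ :=
  clipSym (Δ a) ((∑ b, w b) * (δ - tvDist w Δ) + |Δ a|)

noncomputable def apcMass (δ : ℝ) (Δ : α → ℝ) : ℝ :=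
  (1 / ∑ a, w a) * ∑ a, w a * apcClip w δ Δ a

/-- The summand of state `s` in `j^APC`; `apcMass` is `𝒞_s`. -/
noncomputable def apcSurrogate (A : α → ℝ) (δ : ℝ) (Δ : α → ℝ) : ℝ :=
  ∑ a, w a * (apcClip w δ Δ a * A a + (1 - apcMass w δ Δ) * A a)

variable {w}

lemma apcSurrogate_eq_advValue_add (A : α → ℝ) (δ : ℝ) (Δ : α → ℝ) :
    apcSurrogate w A δ Δ
      = advValue w A (fun a => apcClip w δ Δ a - apcMass w δ Δ) + ∑ a, w a * A a := by
  rw [← sub_eq_iff_eq_add', apcSurrogate, advValue, ← sum_sub_distrib]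
  exact sum_congr rfl fun a _ => by ring

lemma apcClip_neg (δ : ℝ) (Δ : α → ℝ) :
    apcClip w δ (fun a => -Δ a) = fun a => -apcClip w δ Δ a := by
  funext a
  simp only [apcClip, tvDist_neg, abs_neg, clipSym_neg]

lemma apcMass_neg (δ : ℝ) (Δ : α → ℝ) : apcMass w δ (fun a => -Δ a) = -apcMass w δ Δ := by
  simp only [apcMass, apcClip_neg, mul_neg, sum_neg_distrib]

lemma apcClip_of_tvDist_le (hw : ∀ a, 0 ≤ w a) {δ : ℝ} {Δ : α → ℝ} (h : tvDist w Δ ≤ δ) :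
    apcClip w δ Δ = Δ := by
  funext a
  refine clipSym_of_abs_le (le_add_of_nonneg_left (mul_nonneg ?_ (sub_nonneg.2 h)))
  exact sum_nonneg fun b _ => hw b

/-- For `D̂ > δ` the clip is soft thresholding at `u = T (D̂ - δ)`, so, as `𝒞_s ≥ 0`, the positive
part of the re-centred clip lies below `(Δ - u)⁺`. -/
lemma tvDist_apcClip_sub_apcMass_lt_of_nonneg (hw : ∀ a, 1 ≤ w a) {δ : ℝ} (hδ : 0 < δ)
    {Δ : α → ℝ} (hΔ : ∑ a, w a * Δ a = 0) (hD : δ < tvDist w Δ)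
    (hm : 0 ≤ apcMass w δ Δ) :
    tvDist w (fun a => apcClip w δ Δ a - apcMass w δ Δ) < δ := by
  have hw0 a : 0 ≤ w a := zero_le_one.trans (hw a)
  have hT := sum_pos_of_tvDist_ne_zero hw0 (hδ.trans hD).ne'
  set T := ∑ a, w a
  set u := T * (tvDist w Δ - δ)
  have hu : 0 < u := mul_pos hT (sub_pos.2 hD)
  have hcentered := sum_mul_sub_eq_zero hT.ne' (apcClip w δ Δ)
  have hpos a : max (apcClip w δ Δ a - apcMass w δ Δ) 0 ≤ max (Δ a - u) 0 := by
    have hclip : apcClip w δ Δ a = clipSym (Δ a) (|Δ a| - u) := by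
      rw [apcClip]; congr 1; ring
    refine max_le ((sub_le_self _ hm).trans ?_) (le_max_right _ _)
    exact hclip ▸ clipSym_abs_sub_le hu.le (Δ a)
  have hsum : ∑ a, w a * |apcClip w δ Δ a - apcMass w δ Δ| < T * δ := calc
    _ = 2 * ∑ a, w a * max (apcClip w δ Δ a - apcMass w δ Δ) 0 :=
      sum_mul_abs_eq_two_mul_sum_mul_max hcentered
    _ ≤ 2 * ∑ a, w a * max (Δ a - u) 0 := by
      gcongr 2 * ?_
      exact sum_le_sum fun a _ => mul_le_mul_of_nonneg_left (hpos a) (hw0 a)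
    _ < ∑ a, w a * |Δ a| - u := by
      refine two_mul_sum_mul_max_sub_lt hw hΔ hu ?_
      rw [← mul_tvDist hT.ne']
      nlinarith
    _ = T * δ := by rw [← mul_tvDist hT.ne']; ring
  rwa [← mul_tvDist hT.ne', mul_lt_mul_iff_right₀ hT] at hsum

lemma tvDist_apcClip_sub_apcMass_lt (hw : ∀ a, 1 ≤ w a) {δ : ℝ} (hδ : 0 < δ)
    {Δ : α → ℝ} (hΔ : ∑ a, w a * Δ a = 0) (hD : δ < tvDist w Δ) :
    tvDist w (fun a => apcClip w δ Δ a - apcMass w δ Δ) < δ := by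
  rcases le_total 0 (apcMass w δ Δ) with hm | hm
  · exact tvDist_apcClip_sub_apcMass_lt_of_nonneg hw hδ hΔ hD hm
  · have hΔ' : ∑ a, w a * -Δ a = 0 := by simp [hΔ]
    have hD' : δ < tvDist w (fun a => -Δ a) := by rwa [tvDist_neg]
    have := tvDist_apcClip_sub_apcMass_lt_of_nonneg hw hδ hΔ' hD' (by rw [apcMass_neg]; linarith)
    have hsymm : (fun a => apcClip w δ (fun a => -Δ a) a - apcMass w δ (fun a => -Δ a))
        = fun a => -(apcClip w δ Δ a - apcMass w δ Δ) := by
      funext a; rw [apcClip_neg, apcMass_neg]; ring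
    rwa [hsymm, tvDist_neg] at this

lemma apcSurrogate_of_tvDist_le (hw : ∀ a, 0 ≤ w a) (A : α → ℝ) {δ : ℝ} {Δ : α → ℝ}
    (hΔ : ∑ a, w a * Δ a = 0) (h : tvDist w Δ ≤ δ) :
    apcSurrogate w A δ Δ = advValue w A Δ + ∑ a, w a * A a := by
  have hm : apcMass w δ Δ = 0 := by rw [apcMass, apcClip_of_tvDist_le hw h, hΔ, mul_zero]
  simp only [apcSurrogate_eq_advValue_add, hm, sub_zero, apcClip_of_tvDist_le hw h]

variable {A : α → ℝ} {M δ : ℝ}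

lemma apcSurrogate_lt_of_lt (hw : ∀ a, 1 ≤ w a) (hM : M ∈ upperBounds (unitAdvValues w A))
    (hMpos : 0 < M) (hδ : 0 < δ) {Δ : α → ℝ} (hΔ : ∑ a, w a * Δ a = 0)
    (hD : δ < tvDist w Δ) :
    apcSurrogate w A δ Δ < δ * M + ∑ a, w a * A a := by
  have hw0 a : 0 ≤ w a := zero_le_one.trans (hw a)
  have hT := sum_pos_of_tvDist_ne_zero hw0 (hδ.trans hD).ne'
  have hcentered := sum_mul_sub_eq_zero hT.ne' (apcClip w δ Δ)
  rw [apcSurrogate_eq_advValue_add, add_lt_add_iff_right]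
  calc _ ≤ tvDist w (fun a => apcClip w δ Δ a - apcMass w δ Δ) * M :=
        advValue_le_tvDist_mul hw0 hM hcentered
    _ < δ * M := mul_lt_mul_of_pos_right (tvDist_apcClip_sub_apcMass_lt hw hδ hΔ hD) hMpos

lemma apcSurrogate_le (hw : ∀ a, 1 ≤ w a) (hM : M ∈ upperBounds (unitAdvValues w A))
    (hMpos : 0 < M) (hδ : 0 < δ) {Δ : α → ℝ} (hΔ : ∑ a, w a * Δ a = 0) :
    apcSurrogate w A δ Δ ≤ δ * M + ∑ a, w a * A a := by
  have hw0 a : 0 ≤ w a := zero_le_one.trans (hw a)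
  rcases le_or_gt (tvDist w Δ) δ with hD | hD
  · rw [apcSurrogate_of_tvDist_le hw0 A hΔ hD, add_le_add_iff_right]
    exact (advValue_le_tvDist_mul hw0 hM hΔ).trans (mul_le_mul_of_nonneg_right hD hMpos.le)
  · exact (apcSurrogate_lt_of_lt hw hM hMpos hδ hΔ hD).le

lemma apcSurrogate_eq_iff (hw : ∀ a, 1 ≤ w a) (hM : M ∈ upperBounds (unitAdvValues w A))
    (hMpos : 0 < M) (hδ : 0 < δ) {Δ : α → ℝ} (hΔ : ∑ a, w a * Δ a = 0) :
    apcSurrogate w A δ Δ = δ * M + ∑ a, w a * A a ↔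
      tvDist w Δ = δ ∧ advValue w A Δ = δ * M := by
  have hw0 a : 0 ≤ w a := zero_le_one.trans (hw a)
  rcases le_or_gt (tvDist w Δ) δ with hD | hD
  · rw [apcSurrogate_of_tvDist_le hw0 A hΔ hD, add_left_inj]
    refine ⟨fun hV => ⟨hD.antisymm ?_, hV⟩, And.right⟩
    have := advValue_le_tvDist_mul hw0 hM hΔ
    exact le_of_mul_le_mul_right (hV ▸ this) hMpos
  · exact iff_of_false (apcSurrogate_lt_of_lt hw hM hMpos hδ hΔ hD).ne fun h => hD.ne' h.1

end APC

lemma isMaxOn_iff_of_le_of_eq_iff {β γ : Type*} [PartialOrder γ] {f : β → γ} {s : Set β}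
    {P : β → Prop} {c : γ} (hle : ∀ x ∈ s, f x ≤ c) (heq : ∀ x ∈ s, f x = c ↔ P x)
    (hP : ∃ x ∈ s, P x) : ∀ x ∈ s, IsMaxOn f s x ↔ P x := by
  obtain ⟨y, hy, hPy⟩ := hP
  intro x hx
  rw [isMaxOn_iff, ← heq x hx]
  exact ⟨fun h => (hle x hx).antisymm ((heq y hy).2 hPy ▸ h y hy), fun h z hz => h ▸ hle z hz⟩

section Penalty

variable {S : Type*} [Fintype S] {ω M V D : S → ℝ} {κ c t₀ : ℝ}

lemma mul_sum_mul_eq_mul_sum_mul_iff {f g : S → ℝ} (hκ : 0 < κ) (hω : ∀ s, 0 < ω s)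
    (hfg : ∀ s, f s ≤ g s) :
    κ * ∑ s, ω s * f s = κ * ∑ s, ω s * g s ↔ ∀ s, f s = g s := by
  rw [mul_right_inj' hκ.ne', sum_eq_sum_iff_of_le fun s _ =>
    mul_le_mul_of_nonneg_left (hfg s) (hω s).le]
  simp only [mem_univ, true_implies, mul_right_inj' (hω _).ne']

variable [Nonempty S]

lemma sum_mul_le_sup'_mul_sum (hω : ∀ s, 0 ≤ ω s) (hM : ∀ s, 0 ≤ M s)
    (hV : ∀ s, V s ≤ D s * M s) :
    ∑ s, ω s * V s ≤ univ.sup' univ_nonempty D * ∑ s, ω s * M s := by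
  rw [mul_sum]
  refine sum_le_sum fun s _ => ?_
  have := mul_le_mul_of_nonneg_right (le_sup' D (mem_univ s)) (hM s)
  nlinarith [hω s, hV s]

lemma mul_sum_mul_le_two_mul_mul_sup' (hω : ∀ s, 0 ≤ ω s) (hM : ∀ s, 0 ≤ M s)
    (hV : ∀ s, V s ≤ D s * M s) (hκ : 0 ≤ κ) (ht₀ : κ * ∑ s, ω s * M s = 2 * c * t₀) :
    κ * ∑ s, ω s * V s ≤ 2 * c * t₀ * univ.sup' univ_nonempty D := calc
  _ ≤ κ * (univ.sup' univ_nonempty D * ∑ s, ω s * M s) :=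
    mul_le_mul_of_nonneg_left (sum_mul_le_sup'_mul_sum hω hM hV) hκ
  _ = _ := by rw [← ht₀]; ring

/-- `ht₀` puts `t₀` at the vertex of the parabola `t ↦ κ t ∑ ω M - c t²`, whose maximum is
`c t₀²`. -/
lemma sum_mul_sub_mul_sup'_sq_le (hω : ∀ s, 0 ≤ ω s) (hM : ∀ s, 0 ≤ M s)
    (hV : ∀ s, V s ≤ D s * M s) (hκ : 0 ≤ κ) (hc : 0 ≤ c)
    (ht₀ : κ * ∑ s, ω s * M s = 2 * c * t₀) :
    κ * ∑ s, ω s * V s - c * (univ.sup' univ_nonempty D) ^ 2 ≤ c * t₀ ^ 2 := by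
  have := mul_sum_mul_le_two_mul_mul_sup' hω hM hV hκ ht₀
  nlinarith [mul_nonneg hc (sq_nonneg (univ.sup' univ_nonempty D - t₀))]

lemma sum_mul_sub_mul_sup'_sq_eq_iff (hω : ∀ s, 0 < ω s) (hM : ∀ s, 0 < M s)
    (hV : ∀ s, V s ≤ D s * M s) (hκ : 0 < κ) (hc : 0 < c)
    (ht₀ : κ * ∑ s, ω s * M s = 2 * c * t₀) :
    κ * ∑ s, ω s * V s - c * (univ.sup' univ_nonempty D) ^ 2 = c * t₀ ^ 2 ↔
      ∀ s, D s = t₀ ∧ V s = t₀ * M s := by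
  set t := univ.sup' univ_nonempty D
  have hDt s : D s ≤ t := le_sup' D (mem_univ s)
  have hmax : κ * ∑ s, ω s * (t₀ * M s) = 2 * c * t₀ ^ 2 := by
    simp_rw [mul_left_comm (ω _) t₀, ← mul_sum]
    linear_combination t₀ * ht₀
  constructor
  · intro h
    have := mul_sum_mul_le_two_mul_mul_sup' (fun s => (hω s).le) (fun s => (hM s).le) hV hκ.le ht₀
    have ht : t = t₀ := by
      have hsq : c * (t - t₀) ^ 2 ≤ 0 := by nlinarith
      have : (t - t₀) ^ 2 = 0 := (nonpos_of_mul_nonpos_right hsq hc).antisymm (sq_nonneg _)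
      exact sub_eq_zero.1 (pow_eq_zero_iff two_ne_zero |>.1 this)
    have hVt s : V s ≤ t₀ * M s :=
      (hV s).trans (mul_le_mul_of_nonneg_right (ht ▸ hDt s) (hM s).le)
    have hVs := (mul_sum_mul_eq_mul_sum_mul_iff hκ hω hVt).1 (by rw [hmax]; rw [ht] at h; linarith)
    exact fun s => ⟨(ht ▸ hDt s).antisymm (le_of_mul_le_mul_right (hVs s ▸ hV s) (hM s)), hVs s⟩
  · intro h
    have hD : D = fun _ => t₀ := funext fun s => (h s).1
    have ht : t = t₀ := by simp only [t, hD, sup'_const]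
    simp only [ht, (h _).2]
    linear_combination hmax

end Penalty

section Family

variable {S : Type*} {X : S → Type*} [∀ s, Fintype (X s)] (w A : ∀ s, X s → ℝ)

def zeroSumSet : Set (∀ s, X s → ℝ) := {Δ | ∀ s, ∑ a, w s a * Δ s a = 0}

def IsStatewiseOptimal (M : S → ℝ) (t : ℝ) (Δ : ∀ s, X s → ℝ) : Prop :=
  ∀ s, tvDist (w s) (Δ s) = t ∧ advValue (w s) (A s) (Δ s) = t * M s

variable {w A} in
lemma exists_isStatewiseOptimal {M : S → ℝ} {t₀ : ℝ}
    (hM : ∀ s, IsGreatest (unitAdvValues (w s) (A s)) (M s))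
    (ht₀ : 0 ≤ t₀) : ∃ Δ ∈ zeroSumSet w, IsStatewiseOptimal w A M t₀ Δ := by
  choose Δ hΔ using fun s => exists_tvDist_eq_advValue_eq (hM s) ht₀
  exact ⟨Δ, fun s => (hΔ s).1, fun s => (hΔ s).2⟩

variable [Fintype S]

/-- With `κ = 1/((1-γ)Γ)`, `c = 4γ‖Â‖∞/(1-γ)²` and `ω s = Γ_s/T_s`, these are `j` and `j^APC`. -/
noncomputable def penalizedObjective [Nonempty S] (κ c : ℝ) (ω : S → ℝ)
    (Δ : ∀ s, X s → ℝ) : ℝ :=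
  κ * ∑ s, ω s * advValue (w s) (A s) (Δ s)
    - c * (univ.sup' univ_nonempty fun s => tvDist (w s) (Δ s)) ^ 2

noncomputable def apcObjective (κ : ℝ) (ω : S → ℝ) (δ : ℝ) (Δ : ∀ s, X s → ℝ) : ℝ :=
  κ * ∑ s, ω s * apcSurrogate (w s) (A s) δ (Δ s)

variable {w A} {M ω : S → ℝ} {κ c t₀ : ℝ}

lemma isMaxOn_penalizedObjective_iff [Nonempty S] (hw : ∀ s a, 0 ≤ w s a)
    (hM : ∀ s, IsGreatest (unitAdvValues (w s) (A s)) (M s)) (hMpos : ∀ s, 0 < M s)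
    (hω : ∀ s, 0 < ω s) (hκ : 0 < κ) (hc : 0 < c) (ht₀ : κ * ∑ s, ω s * M s = 2 * c * t₀) :
    ∀ Δ ∈ zeroSumSet w, IsMaxOn (penalizedObjective w A κ c ω) (zeroSumSet w) Δ ↔
      IsStatewiseOptimal w A M t₀ Δ := by
  have hV Δ (hΔ : Δ ∈ zeroSumSet w) s :=
    advValue_le_tvDist_mul (A := A s) (hw s) (hM s).2 (hΔ s)
  refine isMaxOn_iff_of_le_of_eq_iff
    (fun Δ hΔ => sum_mul_sub_mul_sup'_sq_le (fun s => (hω s).le) (fun s => (hMpos s).le)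
      (hV Δ hΔ) hκ.le hc.le ht₀)
    (fun Δ hΔ => sum_mul_sub_mul_sup'_sq_eq_iff hω hMpos (hV Δ hΔ) hκ hc ht₀)
    (exists_isStatewiseOptimal hM ?_)
  nlinarith [mul_pos hκ (sum_pos (fun s _ => mul_pos (hω s) (hMpos s)) univ_nonempty)]

lemma isMaxOn_apcObjective_iff (hw : ∀ s a, 1 ≤ w s a)
    (hM : ∀ s, IsGreatest (unitAdvValues (w s) (A s)) (M s)) (hMpos : ∀ s, 0 < M s)
    (hω : ∀ s, 0 < ω s) (hκ : 0 < κ) {δ : ℝ} (hδ : 0 < δ) :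
    ∀ Δ ∈ zeroSumSet w, IsMaxOn (apcObjective w A κ ω δ) (zeroSumSet w) Δ ↔
      IsStatewiseOptimal w A M δ Δ := by
  have hsurr Δ (hΔ : Δ ∈ zeroSumSet w) s :=
    apcSurrogate_le (A := A s) (hw s) (hM s).2 (hMpos s) hδ (hΔ s)
  exact isMaxOn_iff_of_le_of_eq_iff
    (fun Δ hΔ => mul_le_mul_of_nonneg_left (sum_le_sum fun s _ =>
      mul_le_mul_of_nonneg_left (hsurr Δ hΔ s) (hω s).le) hκ.le)
    (fun Δ hΔ => (mul_sum_mul_eq_mul_sum_mul_iff hκ hω (hsurr Δ hΔ)).trans <|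
      forall_congr' fun s => apcSurrogate_eq_iff (hw s) (hM s).2 (hMpos s) hδ (hΔ s))
    (exists_isStatewiseOptimal hM hδ.le)

end Family

end SampleTV

open SampleTV in
theorem stmt_7_general {S : Type} [Fintype S] [Nonempty S]
    (X : S → Type) [∀ s, Fintype (X s)]
    (n : ∀ s, X s → ℕ) (hn : ∀ s a, 1 ≤ n s a)
    (A : ∀ s, X s → ℝ)
    (Anorm : ℝ)
    (hApos : 0 < Anorm)
    (Γ : S → ℝ) (hΓ : ∀ s, 0 < Γ s)
    (γ : ℝ) (hγ0 : 0 < γ) (hγ1 : γ < 1)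
    (M : S → ℝ)
    (hM : ∀ s, IsGreatest {y : ℝ | ∃ Δ : X s → ℝ,
        (1 / (∑ a, (n s a : ℝ))) * (∑ a, (n s a : ℝ) * |Δ a|) = 1 ∧
        (∑ a, (n s a : ℝ) * Δ a) = 0 ∧
        y = ∑ a, (n s a : ℝ) * Δ a * A s a} (M s))
    (hMpos : ∀ s, 0 < M s) :
    let Ts : S → ℝ := fun s => ∑ a, (n s a : ℝ)
    let Γtot : ℝ := ∑ s, Γ s
    let Mtot : ℝ := (1 / Γtot) * ∑ s, (Γ s / Ts s) * M s
    let tstar : ℝ := (1 - γ) * Mtot / (8 * γ * Anorm)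
    let Dhat : S → (∀ s', X s' → ℝ) → ℝ :=
      fun s Δ => (1 / Ts s) * ∑ a, (n s a : ℝ) * |Δ s a|
    let C : Set (∀ s, X s → ℝ) := {Δ | ∀ s, ∑ a, (n s a : ℝ) * Δ s a = 0}
    let j : (∀ s, X s → ℝ) → ℝ := fun Δ =>
      (1 / ((1 - γ) * Γtot)) * ∑ s, (Γ s / Ts s) * ∑ a, (n s a : ℝ) * Δ s a * A s a
      - (4 * γ * Anorm / (1 - γ) ^ 2) *
          (Finset.univ.sup' Finset.univ_nonempty (fun s => Dhat s Δ)) ^ 2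
    let clip : ℝ → ℝ → ℝ := fun x B => max (-(max B 0)) (min x (max B 0))
    let Cs : S → (∀ s', X s' → ℝ) → ℝ → ℝ := fun s Δ δ =>
      (1 / Ts s) * ∑ a, (n s a : ℝ) * clip (Δ s a) (Ts s * (δ - Dhat s Δ) + |Δ s a|)
    let jAPC : (∀ s, X s → ℝ) → ℝ → ℝ := fun Δ δ =>
      (1 / ((1 - γ) * Γtot)) * ∑ s, (Γ s / Ts s) * ∑ a, (n s a : ℝ) *
        (clip (Δ s a) (Ts s * (δ - Dhat s Δ) + |Δ s a|) * A s a + (1 - Cs s Δ δ) * A s a)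
    0 < tstar ∧
    ∀ Δ ∈ C,
      ((∀ Δ' ∈ C, jAPC Δ' tstar ≤ jAPC Δ tstar) ↔ (∀ Δ' ∈ C, j Δ' ≤ j Δ)) ∧
      ((∀ Δ' ∈ C, j Δ' ≤ j Δ) ↔
        (∀ s, Dhat s Δ = tstar ∧
          (∑ a, (n s a : ℝ) * Δ s a * A s a) = tstar * M s)) := by
  intro Ts Γtot Mtot tstar Dhat C j clip Cs jAPC
  let w : ∀ s, X s → ℝ := fun s a => n s a
  have hw s a : 1 ≤ w s a := Nat.one_le_cast.2 (hn s a)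
  have hM' s : IsGreatest (unitAdvValues (w s) (A s)) (M s) := hM s
  have hT s : 0 < Ts s := by
    obtain ⟨Δ, hunit, -⟩ := (hM' s).1
    exact sum_pos_of_tvDist_ne_zero (fun a => zero_le_one.trans (hw s a)) (hunit ▸ one_ne_zero)
  have hω s : 0 < Γ s / Ts s := div_pos (hΓ s) (hT s)
  have hΓtot : 0 < Γtot := sum_pos (fun s _ => hΓ s) univ_nonempty
  have hSM : 0 < ∑ s, Γ s / Ts s * M s :=
    sum_pos (fun s _ => mul_pos (hω s) (hMpos s)) univ_nonempty
  have htstar : 0 < tstar :=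
    div_pos (mul_pos (sub_pos.2 hγ1) (mul_pos (one_div_pos.2 hΓtot) hSM)) (by positivity)
  have hκ : 0 < 1 / ((1 - γ) * Γtot) := one_div_pos.2 (mul_pos (sub_pos.2 hγ1) hΓtot)
  have hc : 0 < 4 * γ * Anorm / (1 - γ) ^ 2 := div_pos (by positivity) (pow_pos (sub_pos.2 hγ1) 2)
  have ht : 1 / ((1 - γ) * Γtot) * ∑ s, Γ s / Ts s * M s
      = 2 * (4 * γ * Anorm / (1 - γ) ^ 2) * tstar := by
    simp only [tstar, Mtot]
    field_simp
    ring
  have hj := isMaxOn_penalizedObjective_iff (fun s a => zero_le_one.trans (hw s a)) hM' hMpos hω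
    hκ hc ht
  have hjAPC := isMaxOn_apcObjective_iff hw hM' hMpos hω hκ htstar
  refine ⟨htstar, fun Δ hΔ => ⟨?_, isMaxOn_iff.symm.trans (hj Δ hΔ)⟩⟩
  exact isMaxOn_iff.symm.trans ((hjAPC Δ hΔ).trans ((hj Δ hΔ).symm.trans isMaxOn_iff))

/-- with δ^APC := t* > 0, a zero-sum Δ maximizes the surrogated
APC-Obj objective iff it maximizes the reduced sample-based TV-TRPO
objective, and the common maximizer set is exactly the set of Δ ∈ C with
per-state TV divergence t* and per-state advantage value t*·M(s). -/
theorem stmt_7 {S : Type} [Fintype S] [Nonempty S]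
    (X : S → Type) [∀ s, Fintype (X s)]
    (hX : ∀ s, 2 ≤ Fintype.card (X s))
    (n : ∀ s, X s → ℕ) (hn : ∀ s a, 1 ≤ n s a)
    (A : ∀ s, X s → ℝ)
    (Anorm : ℝ) (hA : IsGreatest {x : ℝ | ∃ s, ∃ a : X s, x = |A s a|} Anorm)
    (hApos : 0 < Anorm)
    (Γ : S → ℝ) (hΓ : ∀ s, 0 < Γ s)
    (γ : ℝ) (hγ0 : 0 < γ) (hγ1 : γ < 1)
    (M : S → ℝ)
    (hM : ∀ s, IsGreatest {y : ℝ | ∃ Δ : X s → ℝ,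
        (1 / (∑ a, (n s a : ℝ))) * (∑ a, (n s a : ℝ) * |Δ a|) = 1 ∧
        (∑ a, (n s a : ℝ) * Δ a) = 0 ∧
        y = ∑ a, (n s a : ℝ) * Δ a * A s a} (M s))
    (hMpos : ∀ s, 0 < M s) :
    let Ts : S → ℝ := fun s => ∑ a, (n s a : ℝ)
    let Γtot : ℝ := ∑ s, Γ s
    let Mtot : ℝ := (1 / Γtot) * ∑ s, (Γ s / Ts s) * M s
    let tstar : ℝ := (1 - γ) * Mtot / (8 * γ * Anorm)
    let Dhat : S → (∀ s', X s' → ℝ) → ℝ :=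
      fun s Δ => (1 / Ts s) * ∑ a, (n s a : ℝ) * |Δ s a|
    let C : Set (∀ s, X s → ℝ) := {Δ | ∀ s, ∑ a, (n s a : ℝ) * Δ s a = 0}
    let j : (∀ s, X s → ℝ) → ℝ := fun Δ =>
      (1 / ((1 - γ) * Γtot)) * ∑ s, (Γ s / Ts s) * ∑ a, (n s a : ℝ) * Δ s a * A s a
      - (4 * γ * Anorm / (1 - γ) ^ 2) *
          (Finset.univ.sup' Finset.univ_nonempty (fun s => Dhat s Δ)) ^ 2
    let clip : ℝ → ℝ → ℝ := fun x B => max (-(max B 0)) (min x (max B 0))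
    let Cs : S → (∀ s', X s' → ℝ) → ℝ → ℝ := fun s Δ δ =>
      (1 / Ts s) * ∑ a, (n s a : ℝ) * clip (Δ s a) (Ts s * (δ - Dhat s Δ) + |Δ s a|)
    let jAPC : (∀ s, X s → ℝ) → ℝ → ℝ := fun Δ δ =>
      (1 / ((1 - γ) * Γtot)) * ∑ s, (Γ s / Ts s) * ∑ a, (n s a : ℝ) *
        (clip (Δ s a) (Ts s * (δ - Dhat s Δ) + |Δ s a|) * A s a + (1 - Cs s Δ δ) * A s a)
    0 < tstar ∧
    ∀ Δ ∈ C,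
      ((∀ Δ' ∈ C, jAPC Δ' tstar ≤ jAPC Δ tstar) ↔ (∀ Δ' ∈ C, j Δ' ≤ j Δ)) ∧
      ((∀ Δ' ∈ C, j Δ' ≤ j Δ) ↔
        (∀ s, Dhat s Δ = tstar ∧
          (∑ a, (n s a : ℝ) * Δ s a * A s a) = tstar * M s)) :=
  stmt_7_general X n hn A Anorm hApos Γ hΓ γ hγ0 hγ1 M hM hMpos
end

section
/- For every real x, every A > 0 and every k > 0: clip(x, ±(A − k·|x|)) = g^agg(x, A/(k+1), k). That is, the coupled APC-Obj clipping with ratio-dependent bound decomposes exactly into the three-regime aggregate gate with pass-through threshold C = A/(k+1): pass-through for |x| ≤ A/(k+1), rollback with slope −k for A/(k+1) < |x| < A/k, and zeroing for |x| ≥ A/k. -/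
/-!
With `B = A - k|x|` and `C = A/(k+1)`, the condition `|x| ≤ B` is `|x| ≤ C`, and `B ≤ 0` is
`|x| ≥ A/k = (1 + 1/k) C`. In between, `0 < B < |x|`, so clipping returns
`sign x · B = sign x · (k+1) C - k x`.
-/

theorem Real.sign_mul_abs (x : ℝ) : Real.sign x * |x| = x := by
  rcases lt_trichotomy x 0 with hx | rfl | hx
  · rw [Real.sign_of_neg hx, abs_of_neg hx, neg_one_mul, neg_neg]
  · rw [abs_zero, mul_zero]
  · rw [Real.sign_of_pos hx, abs_of_pos hx, one_mul]

theorem max_neg_min_eq_self {x b : ℝ} (h : |x| ≤ b) : max (-b) (min x b) = x := by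
  rw [abs_le] at h
  rw [min_eq_left h.2, max_eq_right h.1]

theorem max_neg_min_eq_sign_mul {x b : ℝ} (hb : 0 ≤ b) (h : b ≤ |x|) :
    max (-b) (min x b) = Real.sign x * b := by
  rcases lt_trichotomy x 0 with hx | rfl | hx
  · rw [abs_of_neg hx] at h
    rw [Real.sign_of_neg hx, min_eq_left (by linarith), max_eq_left (by linarith), neg_one_mul]
  · rw [abs_zero] at h
    rw [le_antisymm h hb, min_self, neg_zero, max_self, mul_zero]
  · rw [abs_of_pos hx] at h
    rw [Real.sign_of_pos hx, min_eq_right h, max_eq_right (by linarith), one_mul]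

theorem stmt_12_general (x A k : ℝ) (hk : 0 < k) :
    let clip : ℝ → ℝ → ℝ := fun y B => max (-(max B 0)) (min y (max B 0))
    let gagg : ℝ → ℝ → ℝ → ℝ := fun y C κ =>
      if |y| ≤ C then y
      else if |y| < (1 + 1 / κ) * C then Real.sign y * (κ + 1) * C - κ * y
      else 0
    clip x (A - k * |x|) = gagg x (A / (k + 1)) k := by
  intro clip gagg
  have hk1 : 0 < k + 1 := by linarith
  have hzero_threshold : (1 + 1 / k) * (A / (k + 1)) = A / k := by
    field_simp
  simp only [clip, gagg, hzero_threshold]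
  split_ifs with hpass hroll
  · rw [le_div_iff₀ hk1] at hpass
    have hB : |x| ≤ A - k * |x| := by linarith
    rw [max_eq_left ((abs_nonneg x).trans hB), max_neg_min_eq_self hB]
  · rw [not_le, div_lt_iff₀ hk1] at hpass
    rw [lt_div_iff₀ hk] at hroll
    have hB : 0 ≤ A - k * |x| := by linarith
    rw [max_eq_left hB, max_neg_min_eq_sign_mul hB (by linarith)]
    rw [mul_assoc, mul_div_cancel₀ A hk1.ne']
    linear_combination -k * Real.sign_mul_abs x
  · rw [not_lt, div_le_iff₀ hk] at hroll
    have hB : A - k * |x| ≤ 0 := by linarith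
    rw [max_eq_right hB, max_neg_min_eq_sign_mul le_rfl (abs_nonneg x), mul_zero]

/-- the coupled APC-Obj clipping with ratio-dependent bound
A − k·|x| decomposes exactly into the three-regime aggregate gate with
pass-through threshold C = A/(k+1). -/
theorem stmt_12 (x A k : ℝ) (hA : 0 < A) (hk : 0 < k) :
    let clip : ℝ → ℝ → ℝ := fun y B => max (-(max B 0)) (min y (max B 0))
    let gagg : ℝ → ℝ → ℝ → ℝ := fun y C κ =>
      if |y| ≤ C then y
      else if |y| < (1 + 1 / κ) * C then Real.sign y * (κ + 1) * C - κ * y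
      else 0
    clip x (A - k * |x|) = gagg x (A / (k + 1)) k :=
  stmt_12_general x A k hk
end

section
/- For every token i: l_i·u_i − l_i·v_i = log r_i − (1/T) Σ_{t=1}^T log r_t (note that (1/T) Σ_t log r_t = log s⁺ − log s⁻). Consequently, whenever |u_i| ≤ ε and |v_i| ≤ ε, the gated residual r̃_i := exp( clip(l_i·u_i, −ε, ε) − clip(l_i·v_i, −ε, ε) ) satisfies log r̃_i = log r_i − (1/T) Σ_{t=1}^T log r_t; i.e., when no clip saturates, the fiber gate is exactly the trajectory-mean-centered log-ratio. -/
/-!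
Splitting each log-ratio into its positive and negative parts gives
`(1/T) Σ log r_t = log s⁺ - log s⁻`. For either sign `l = ±1` one has `l² = 1`, so
`l u - l v = log r - l (s^{(l)} - s^{(-l)})`, and `l (s^{(l)} - s^{(-l)}) = log s⁺ - log s⁻`
in both cases. When `|u|, |v| ≤ ε` the clips act as the identity, because `|l| = 1`.
-/

open Finset

theorem mul_sum_eq_mul_sum_max_zero_sub {ι : Type*} (s : Finset ι) (c : ℝ) (f : ι → ℝ) :
    c * ∑ t ∈ s, f t = c * ∑ t ∈ s, max (f t) 0 - c * ∑ t ∈ s, max (-f t) 0 := by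
  rw [← mul_sub, ← sum_sub_distrib]
  simp only [max_zero_sub_max_neg_zero_eq_self]

theorem mul_mul_sub_ite_sub_mul_neg_ite {l : ℝ} (hl : l = 1 ∨ l = -1) (x p m : ℝ) :
    l * (l * x - (if l = 1 then p else m)) - l * -(if -l = 1 then p else m) = x - (p - m) := by
  rcases hl with rfl | rfl <;> norm_num <;> ring

theorem max_neg_min_eq_self_of_abs_le {α : Type*} [AddCommGroup α] [LinearOrder α]
    [IsOrderedAddMonoid α] {x ε : α} (h : |x| ≤ ε) : max (-ε) (min x ε) = x := by
  rw [abs_le] at h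
  rw [min_eq_left h.2, max_eq_right h.1]

theorem stmt_13_general (T : ℕ) (ε : ℝ)
    (r : Fin T → ℝ) :
    let logsp : ℝ := (1 / (T : ℝ)) * ∑ t, max (Real.log (r t)) 0
    let logsm : ℝ := (1 / (T : ℝ)) * ∑ t, max (-Real.log (r t)) 0
    let l : Fin T → ℝ := fun i => if 0 ≤ Real.log (r i) then 1 else -1
    let slog : ℝ → ℝ := fun x => if x = 1 then logsp else logsm
    let u : Fin T → ℝ := fun i => l i * Real.log (r i) - slog (l i)
    let v : Fin T → ℝ := fun i => -slog (-(l i))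
    let clip : ℝ → ℝ := fun x => max (-ε) (min x ε)
    ((1 / (T : ℝ)) * ∑ t, Real.log (r t) = logsp - logsm) ∧
    (∀ i, l i * u i - l i * v i = Real.log (r i) - (1 / (T : ℝ)) * ∑ t, Real.log (r t)) ∧
    (∀ i, |u i| ≤ ε → |v i| ≤ ε →
      Real.log (Real.exp (clip (l i * u i) - clip (l i * v i))) =
        Real.log (r i) - (1 / (T : ℝ)) * ∑ t, Real.log (r t)) := by
  intro logsp logsm l slog u v clip
  have hmean : (1 / (T : ℝ)) * ∑ t, Real.log (r t) = logsp - logsm :=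
    mul_sum_eq_mul_sum_max_zero_sub _ _ _
  have hsign : ∀ i, l i = 1 ∨ l i = -1 := fun i => ite_eq_or_eq _ _ _
  have hkey : ∀ i, l i * u i - l i * v i =
      Real.log (r i) - (1 / (T : ℝ)) * ∑ t, Real.log (r t) := fun i => by
    rw [hmean]
    exact mul_mul_sub_ite_sub_mul_neg_ite (hsign i) _ _ _
  have hclip : ∀ i y, |y| ≤ ε → clip (l i * y) = l i * y := fun i y hy =>
    max_neg_min_eq_self_of_abs_le <| by
      rwa [abs_mul, (abs_eq zero_le_one).2 (hsign i), one_mul]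
  refine ⟨hmean, hkey, fun i hu hv => ?_⟩
  rw [Real.log_exp, hclip i _ hu, hclip i _ hv, hkey]

/-- the signed fiber-residual identity
l_i·u_i − l_i·v_i = log r_i − (1/T)Σ log r_t (with (1/T)Σ log r_t =
log s⁺ − log s⁻), and when no clip saturates the gated residual is exactly
the trajectory-mean-centered log-ratio. -/
theorem stmt_13 (T : ℕ) (hT : 1 ≤ T) (ε : ℝ) (hε : 0 < ε)
    (r : Fin T → ℝ) (hr : ∀ t, 0 < r t) :
    let logsp : ℝ := (1 / (T : ℝ)) * ∑ t, max (Real.log (r t)) 0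
    let logsm : ℝ := (1 / (T : ℝ)) * ∑ t, max (-Real.log (r t)) 0
    let l : Fin T → ℝ := fun i => if 0 ≤ Real.log (r i) then 1 else -1
    let slog : ℝ → ℝ := fun x => if x = 1 then logsp else logsm
    let u : Fin T → ℝ := fun i => l i * Real.log (r i) - slog (l i)
    let v : Fin T → ℝ := fun i => -slog (-(l i))
    let clip : ℝ → ℝ := fun x => max (-ε) (min x ε)
    ((1 / (T : ℝ)) * ∑ t, Real.log (r t) = logsp - logsm) ∧
    (∀ i, l i * u i - l i * v i = Real.log (r i) - (1 / (T : ℝ)) * ∑ t, Real.log (r t)) ∧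
    (∀ i, |u i| ≤ ε → |v i| ≤ ε →
      Real.log (Real.exp (clip (l i * u i) - clip (l i * v i))) =
        Real.log (r i) - (1 / (T : ℝ)) * ∑ t, Real.log (r t)) :=
  stmt_13_general T ε r
end

section
/- (i) If |u_i| ≤ ε and |v_i| ≤ ε for every token i, and log s⁺ ≤ C⁺ and log s⁻ ≤ C⁻, then 𝒢(r)_i = r_i for every token i; i.e., in the full pass-through regime the FiberPO gating map is the identity and the surrogate recovers the linear (importance-sampling) objective. (ii) There is an open neighborhood of the on-policy point (1, …, 1) in (0,∞)^T on which 𝒢 is the identity map; in particular 𝒢(1,…,1) = (1,…,1) and 𝒢 is differentiable at (1,…,1) with total derivative the identity, so the FiberPO surrogate agrees with the ungated objective to first order at on-policy. -/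
/-!
In the pass-through regime every clip and every aggregate gate acts as the identity, and for a
token with sign label `l = ±1` the exponent becomes
`log s⁺ - log s⁻ + log rᵢ - l · (log s^(l) - log s^(-l))`, which is `log rᵢ` because
`l · (log s^(l) - log s^(-l)) = log s⁺ - log s⁻`. Near the on-policy point all `|log rₜ|` are
small, hence so are `log s^±`, `uᵢ` and `vᵢ`; thus the pass-through regime contains the open box
`log r ∈ (-m, m)^T` with `m = min ε (min C⁺ C⁻)`, and on it `𝒢 = id`.
-/

open Real Finset

theorem one_div_card_mul_sum_le {ι : Type*} (s : Finset ι) {f : ι → ℝ} {m : ℝ} (hm : 0 ≤ m)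
    (hf : ∀ i ∈ s, f i ≤ m) : (1 / (#s : ℝ)) * ∑ i ∈ s, f i ≤ m := by
  rcases s.eq_empty_or_nonempty with rfl | hs
  · simpa using hm
  have hcard : (0 : ℝ) < #s := by exact_mod_cast hs.card_pos
  calc (1 / (#s : ℝ)) * ∑ i ∈ s, f i ≤ (1 / (#s : ℝ)) * (#s * m) := by
        gcongr
        simpa using sum_le_card_nsmul s f m hf
    _ = m := by field_simp

namespace FiberPO

variable {T : ℕ}

noncomputable section

def clip (ε x : ℝ) : ℝ := max (-ε) (min x ε)

def gateAgg (y C κ : ℝ) : ℝ :=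
  if |y| ≤ C then y
  else if |y| < (1 + 1 / κ) * C then Real.sign y * (κ + 1) * C - κ * y
  else 0

def logSp (r : Fin T → ℝ) : ℝ := (1 / (T : ℝ)) * ∑ t, max (log (r t)) 0

def logSm (r : Fin T → ℝ) : ℝ := (1 / (T : ℝ)) * ∑ t, max (-log (r t)) 0

def label (r : Fin T → ℝ) (i : Fin T) : ℝ := if 0 ≤ log (r i) then 1 else -1

/-- `aggLog r 1 = log s⁺` and `aggLog r (-1) = log s⁻`: the paper's `log s^(l)`. -/
def aggLog (r : Fin T → ℝ) (x : ℝ) : ℝ := if x = 1 then logSp r else logSm r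

def fiberResidual (r : Fin T → ℝ) (i : Fin T) : ℝ := label r i * log (r i) - aggLog r (label r i)

def oppAggregate (r : Fin T → ℝ) (i : Fin T) : ℝ := -aggLog r (-label r i)

def gatedRatio (ε Cp Cm : ℝ) (r : Fin T → ℝ) (i : Fin T) : ℝ :=
  exp (gateAgg (logSp r) Cp T - gateAgg (logSm r) Cm T
    + clip ε (label r i * fiberResidual r i) - clip ε (label r i * oppAggregate r i))

def logCube (ι : Type*) (m : ℝ) : Set (ι → ℝ) := Set.univ.pi fun _ => Set.Ioo (exp (-m)) (exp m)

end

theorem clip_eq_self {ε x : ℝ} (h : |x| ≤ ε) : clip ε x = x := by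
  rw [abs_le] at h
  rw [clip, min_eq_left h.2, max_eq_right h.1]

theorem gateAgg_eq_self {y C : ℝ} (κ : ℝ) (h : |y| ≤ C) : gateAgg y C κ = y := if_pos h

theorem logSp_nonneg (r : Fin T → ℝ) : 0 ≤ logSp r := by
  unfold logSp; positivity

theorem logSm_nonneg (r : Fin T → ℝ) : 0 ≤ logSm r := by
  unfold logSm; positivity

theorem logSp_le {r : Fin T → ℝ} {m : ℝ} (hm : 0 ≤ m) (h : ∀ t, |log (r t)| ≤ m) :
    logSp r ≤ m := by
  simpa [logSp] using one_div_card_mul_sum_le univ hm fun t _ => max_le (abs_le.1 (h t)).2 hm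

theorem logSm_le {r : Fin T → ℝ} {m : ℝ} (hm : 0 ≤ m) (h : ∀ t, |log (r t)| ≤ m) :
    logSm r ≤ m := by
  simpa [logSm] using one_div_card_mul_sum_le univ hm fun t _ => max_le (neg_le.1 (abs_le.1 (h t)).1) hm

theorem aggLog_nonneg (r : Fin T → ℝ) (x : ℝ) : 0 ≤ aggLog r x := by
  unfold aggLog; split_ifs
  exacts [logSp_nonneg r, logSm_nonneg r]

theorem aggLog_le {r : Fin T → ℝ} {m : ℝ} (hm : 0 ≤ m) (h : ∀ t, |log (r t)| ≤ m) (x : ℝ) :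
    aggLog r x ≤ m := by
  unfold aggLog; split_ifs
  exacts [logSp_le hm h, logSm_le hm h]

theorem label_eq_one_or_neg_one (r : Fin T → ℝ) (i : Fin T) : label r i = 1 ∨ label r i = -1 := by
  unfold label; split_ifs <;> simp

theorem abs_label_mul (r : Fin T → ℝ) (i : Fin T) (x : ℝ) : |label r i * x| = |x| := by
  rcases label_eq_one_or_neg_one r i with h | h <;> simp [h]

theorem label_mul_log (r : Fin T → ℝ) (i : Fin T) : label r i * log (r i) = |log (r i)| := by
  unfold label; split_ifs with h
  · rw [one_mul, abs_of_nonneg h]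
  · rw [neg_one_mul, abs_of_neg (not_le.1 h)]

theorem ungated_exponent_eq_log (r : Fin T → ℝ) (i : Fin T) :
    logSp r - logSm r + label r i * fiberResidual r i - label r i * oppAggregate r i =
      log (r i) := by
  have hne : (-1 : ℝ) ≠ 1 := by norm_num
  rcases label_eq_one_or_neg_one r i with h | h <;>
    simp only [fiberResidual, oppAggregate, aggLog, h, hne, if_true, if_false, neg_neg] <;> ring

theorem gatedRatio_eq_self {ε Cp Cm : ℝ} {r : Fin T → ℝ} {i : Fin T} (hr : 0 < r i)
    (hu : |fiberResidual r i| ≤ ε) (hv : |oppAggregate r i| ≤ ε)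
    (hp : logSp r ≤ Cp) (hm : logSm r ≤ Cm) : gatedRatio ε Cp Cm r i = r i := by
  rw [gatedRatio, gateAgg_eq_self _ (by rwa [abs_of_nonneg (logSp_nonneg r)]),
    gateAgg_eq_self _ (by rwa [abs_of_nonneg (logSm_nonneg r)]),
    clip_eq_self (by rwa [abs_label_mul]), clip_eq_self (by rwa [abs_label_mul]),
    ungated_exponent_eq_log, exp_log hr]

theorem isOpen_logCube (ι : Type*) [Finite ι] (m : ℝ) : IsOpen (logCube ι m) :=
  isOpen_set_pi Set.finite_univ fun _ _ => isOpen_Ioo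

theorem one_mem_logCube (ι : Type*) {m : ℝ} (hm : 0 < m) : (fun _ => (1 : ℝ)) ∈ logCube ι m :=
  fun _ _ => ⟨exp_lt_one_iff.2 (neg_lt_zero.2 hm), one_lt_exp_iff.2 hm⟩

theorem pos_of_mem_logCube {ι : Type*} {m : ℝ} {r : ι → ℝ} (hr : r ∈ logCube ι m) (t : ι) :
    0 < r t :=
  (exp_pos _).trans (hr t trivial).1

theorem abs_log_le_of_mem_logCube {ι : Type*} {m : ℝ} {r : ι → ℝ} (hr : r ∈ logCube ι m)
    (t : ι) : |log (r t)| ≤ m := by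
  have hpos := pos_of_mem_logCube hr t
  obtain ⟨hlo, hhi⟩ := hr t trivial
  exact abs_le.2 ⟨((lt_log_iff_exp_lt hpos).2 hlo).le, ((log_lt_iff_lt_exp hpos).2 hhi).le⟩

theorem gatedRatio_eq_self_of_mem_logCube {ε Cp Cm m : ℝ} (hm : 0 < m) (hmε : m ≤ ε)
    (hmp : m ≤ Cp) (hmm : m ≤ Cm) {r : Fin T → ℝ} (hr : r ∈ logCube (Fin T) m) :
    gatedRatio ε Cp Cm r = r := by
  have hlog := abs_log_le_of_mem_logCube hr
  funext i
  refine gatedRatio_eq_self (pos_of_mem_logCube hr i) ?_ ?_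
    ((logSp_le hm.le hlog).trans hmp) ((logSm_le hm.le hlog).trans hmm)
  · rw [fiberResidual, label_mul_log]
    exact (abs_sub_le_of_nonneg_of_le (abs_nonneg _) (hlog i) (aggLog_nonneg r _)
      (aggLog_le hm.le hlog _)).trans hmε
  · rw [oppAggregate, abs_neg, abs_of_nonneg (aggLog_nonneg r _)]
    exact (aggLog_le hm.le hlog _).trans hmε

end FiberPO

open FiberPO

theorem stmt_14_general (T : ℕ) (ε Cp Cm : ℝ)
    (hε : 0 < ε) (hCp : 0 < Cp) (hCm : 0 < Cm) :
    let clip : ℝ → ℝ := fun x => max (-ε) (min x ε)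
    let gagg : ℝ → ℝ → ℝ → ℝ := fun y C κ =>
      if |y| ≤ C then y
      else if |y| < (1 + 1 / κ) * C then Real.sign y * (κ + 1) * C - κ * y
      else 0
    let logsp : (Fin T → ℝ) → ℝ := fun r => (1 / (T : ℝ)) * ∑ t, max (Real.log (r t)) 0
    let logsm : (Fin T → ℝ) → ℝ := fun r => (1 / (T : ℝ)) * ∑ t, max (-Real.log (r t)) 0
    let l : (Fin T → ℝ) → Fin T → ℝ := fun r i => if 0 ≤ Real.log (r i) then 1 else -1
    let slog : (Fin T → ℝ) → ℝ → ℝ := fun r x => if x = 1 then logsp r else logsm r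
    let u : (Fin T → ℝ) → Fin T → ℝ := fun r i => l r i * Real.log (r i) - slog r (l r i)
    let v : (Fin T → ℝ) → Fin T → ℝ := fun r i => -slog r (-(l r i))
    let G : (Fin T → ℝ) → Fin T → ℝ := fun r i =>
      Real.exp (gagg (logsp r) Cp (T : ℝ) - gagg (logsm r) Cm (T : ℝ)
        + clip (l r i * u r i) - clip (l r i * v r i))
    (∀ r : Fin T → ℝ, (∀ t, 0 < r t) →
      (∀ i, |u r i| ≤ ε) → (∀ i, |v r i| ≤ ε) → logsp r ≤ Cp → logsm r ≤ Cm →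
      ∀ i, G r i = r i) ∧
    (∃ U : Set (Fin T → ℝ), IsOpen U ∧ (fun _ => (1 : ℝ)) ∈ U ∧
      (∀ r ∈ U, ∀ t, 0 < r t) ∧ (∀ r ∈ U, G r = r)) ∧
    G (fun _ => 1) = (fun _ => 1) ∧
    HasFDerivAt G (ContinuousLinearMap.id ℝ (Fin T → ℝ)) (fun _ => 1) := by
  intro clip gagg logsp logsm l slog u v G
  set m := min ε (min Cp Cm)
  have hm : 0 < m := lt_min hε (lt_min hCp hCm)
  have hU : ∀ r ∈ logCube (Fin T) m, G r = r := fun r hr =>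
    gatedRatio_eq_self_of_mem_logCube hm (min_le_left _ _) ((min_le_right _ _).trans
      (min_le_left _ _)) ((min_le_right _ _).trans (min_le_right _ _)) hr
  have h1 := one_mem_logCube (Fin T) hm
  refine ⟨fun r hr hu hv hp hn i => gatedRatio_eq_self (hr i) (hu i) (hv i) hp hn,
    ⟨_, isOpen_logCube _ m, h1, fun r hr => pos_of_mem_logCube hr, hU⟩, hU _ h1, ?_⟩
  exact (hasFDerivAt_id _).congr_of_eventuallyEq
    (Filter.eventuallyEq_of_mem ((isOpen_logCube _ m).mem_nhds h1) hU)

/-- (i) in the full pass-through regime the FiberPO gating map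
is the identity; (ii) there is an open neighborhood of the on-policy point
(1,…,1) consisting of positive vectors on which 𝒢 = id, so 𝒢 fixes (1,…,1)
and is differentiable there with identity total derivative. -/
theorem stmt_14 (T : ℕ) (hT : 1 ≤ T) (ε Cp Cm : ℝ)
    (hε : 0 < ε) (hCp : 0 < Cp) (hCm : 0 < Cm) :
    let clip : ℝ → ℝ := fun x => max (-ε) (min x ε)
    let gagg : ℝ → ℝ → ℝ → ℝ := fun y C κ =>
      if |y| ≤ C then y
      else if |y| < (1 + 1 / κ) * C then Real.sign y * (κ + 1) * C - κ * y
      else 0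
    let logsp : (Fin T → ℝ) → ℝ := fun r => (1 / (T : ℝ)) * ∑ t, max (Real.log (r t)) 0
    let logsm : (Fin T → ℝ) → ℝ := fun r => (1 / (T : ℝ)) * ∑ t, max (-Real.log (r t)) 0
    let l : (Fin T → ℝ) → Fin T → ℝ := fun r i => if 0 ≤ Real.log (r i) then 1 else -1
    let slog : (Fin T → ℝ) → ℝ → ℝ := fun r x => if x = 1 then logsp r else logsm r
    let u : (Fin T → ℝ) → Fin T → ℝ := fun r i => l r i * Real.log (r i) - slog r (l r i)
    let v : (Fin T → ℝ) → Fin T → ℝ := fun r i => -slog r (-(l r i))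
    let G : (Fin T → ℝ) → Fin T → ℝ := fun r i =>
      Real.exp (gagg (logsp r) Cp (T : ℝ) - gagg (logsm r) Cm (T : ℝ)
        + clip (l r i * u r i) - clip (l r i * v r i))
    (∀ r : Fin T → ℝ, (∀ t, 0 < r t) →
      (∀ i, |u r i| ≤ ε) → (∀ i, |v r i| ≤ ε) → logsp r ≤ Cp → logsm r ≤ Cm →
      ∀ i, G r i = r i) ∧
    (∃ U : Set (Fin T → ℝ), IsOpen U ∧ (fun _ => (1 : ℝ)) ∈ U ∧
      (∀ r ∈ U, ∀ t, 0 < r t) ∧ (∀ r ∈ U, G r = r)) ∧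
    G (fun _ => 1) = (fun _ => 1) ∧
    HasFDerivAt G (ContinuousLinearMap.id ℝ (Fin T → ℝ)) (fun _ => 1) :=
  stmt_14_general T ε Cp Cm hε hCp hCm
end

section
/- Three-regime characterization of APC-Obj clipping: let u : X → ℝ with Σ_{a∈X} n_a u_a = 0 and let a ∈ X with u_a ≠ 0. Then exactly one of the following holds: (P) pass-through: D(u) ≤ δ, in which case G(u)_a = u_a; (R) rollback: D(u) > δ and |u_a| > T·(D(u) − δ), in which case G(u)_a has the same sign as u_a and 0 < |G(u)_a| < |u_a|; (Z) zeroed: D(u) > δ and |u_a| ≤ T·(D(u) − δ), in which case G(u)_a = 0. -/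
/-!
Writing `B := T (δ - D u) + |u_a|` for the clipping bound at `a`, the three regimes are exactly
`|u_a| ≤ B`, `0 < B < |u_a|` and `B ≤ 0`, and symmetric clipping at level `B` fixes `u_a`,
moves it to `± B` on its own side of zero, or sends it to `0` respectively. In the rollback
regime `B < |u_a|` because `T > 0`, which follows from `D u > δ > 0`.
-/

/-- Clipping to `[-B, B]`; a negative bound acts as `0`. -/
def symClip (x B : ℝ) : ℝ := max (-(max B 0)) (min x (max B 0))

theorem symClip_of_abs_le {x B : ℝ} (h : |x| ≤ B) : symClip x B = x := by
  have hB : max B 0 = B := max_eq_left ((abs_nonneg x).trans h)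
  rw [symClip, hB, min_eq_left (le_abs_self x |>.trans h),
    max_eq_right ((neg_le_neg h).trans (neg_abs_le x))]

theorem symClip_of_nonpos {x B : ℝ} (h : B ≤ 0) : symClip x B = 0 := by
  rw [symClip, max_eq_right h, neg_zero, max_eq_left (min_le_right x 0)]

theorem symClip_of_pos_of_lt_abs {x B : ℝ} (hB : 0 < B) (h : B < |x|) :
    Real.sign (symClip x B) = Real.sign x ∧ |symClip x B| = B := by
  rw [symClip, max_eq_left hB.le]
  rcases lt_or_ge x 0 with hx | hx
  · rw [abs_of_neg hx] at h
    rw [min_eq_left (by linarith), max_eq_left (by linarith), abs_neg, abs_of_pos hB,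
      Real.sign_of_neg (neg_neg_iff_pos.mpr hB), Real.sign_of_neg hx]
    exact ⟨rfl, rfl⟩
  · rw [abs_of_nonneg hx] at h
    rw [min_eq_right h.le, max_eq_right (by linarith), abs_of_pos hB,
      Real.sign_of_pos hB, Real.sign_of_pos (hB.trans h)]
    exact ⟨rfl, rfl⟩

theorem stmt_17_general {X : Type} [Fintype X]
    (n : X → ℕ) (δ : ℝ) (hδ : 0 < δ)
    (u : X → ℝ) (a : X) :
    let T : ℝ := ∑ b, (n b : ℝ)
    let clip : ℝ → ℝ → ℝ := fun x B => max (-(max B 0)) (min x (max B 0))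
    let D : (X → ℝ) → ℝ := fun w => (1 / T) * ∑ b, (n b : ℝ) * |w b|
    let G : X → ℝ := fun b => clip (u b) (T * (δ - D u) + |u b|)
    let P : Prop := D u ≤ δ
    let R : Prop := D u > δ ∧ |u a| > T * (D u - δ)
    let Z : Prop := D u > δ ∧ |u a| ≤ T * (D u - δ)
    ((P ∧ ¬R ∧ ¬Z) ∨ (¬P ∧ R ∧ ¬Z) ∨ (¬P ∧ ¬R ∧ Z)) ∧
    (P → G a = u a) ∧
    (R → Real.sign (G a) = Real.sign (u a) ∧ 0 < |G a| ∧ |G a| < |u a|) ∧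
    (Z → G a = 0) := by
  intro T clip D G P R Z
  have hG : G a = symClip (u a) (T * (δ - D u) + |u a|) := rfl
  have hT : 0 ≤ T := by positivity
  have hneg : T * (δ - D u) = -(T * (D u - δ)) := by ring
  refine ⟨?_, fun hP => ?_, fun ⟨hD, hR⟩ => ?_, fun ⟨_, hZ⟩ => ?_⟩
  · rcases le_or_gt (D u) δ with hP | hP
    · exact Or.inl ⟨hP, fun h => h.1.not_ge hP, fun h => h.1.not_ge hP⟩
    · rcases lt_or_ge (T * (D u - δ)) |u a| with hR | hZ
      · exact Or.inr <| Or.inl ⟨hP.not_ge, ⟨hP, hR⟩, fun h => h.2.not_gt hR⟩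
      · exact Or.inr <| Or.inr ⟨hP.not_ge, fun h => h.2.not_ge hZ, ⟨hP, hZ⟩⟩
  · exact hG.trans <| symClip_of_abs_le <|
      le_add_of_nonneg_left (mul_nonneg hT (sub_nonneg.mpr hP))
  · have hTpos : 0 < T := by
      by_contra! hT'
      have : D u ≤ 0 := mul_nonpos_of_nonpos_of_nonneg (one_div_nonpos.mpr hT') (by positivity)
      linarith
    have hshift : 0 < T * (D u - δ) := mul_pos hTpos (sub_pos.mpr hD)
    obtain ⟨hsign, habs⟩ := symClip_of_pos_of_lt_abs (x := u a) (B := T * (δ - D u) + |u a|)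
      (by linarith) (by linarith)
    rw [hG, habs]
    exact ⟨hsign, by linarith, by linarith⟩
  · exact hG.trans <| symClip_of_nonpos (by linarith)

/-- three-regime characterization of APC-Obj clipping: for a
zero-weighted-sum vector u and an entry a with u_a ≠ 0, exactly one of
pass-through (P), rollback (R), zeroed (Z) holds, with the corresponding
behavior of the gated value G(u)_a. -/
theorem stmt_17 {X : Type} [Fintype X] [Nonempty X]
    (n : X → ℕ) (hn : ∀ a, 1 ≤ n a) (δ : ℝ) (hδ : 0 < δ)
    (u : X → ℝ) (hu : ∑ a, (n a : ℝ) * u a = 0) (a : X) (ha : u a ≠ 0) :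
    let T : ℝ := ∑ b, (n b : ℝ)
    let clip : ℝ → ℝ → ℝ := fun x B => max (-(max B 0)) (min x (max B 0))
    let D : (X → ℝ) → ℝ := fun w => (1 / T) * ∑ b, (n b : ℝ) * |w b|
    let G : X → ℝ := fun b => clip (u b) (T * (δ - D u) + |u b|)
    let P : Prop := D u ≤ δ
    let R : Prop := D u > δ ∧ |u a| > T * (D u - δ)
    let Z : Prop := D u > δ ∧ |u a| ≤ T * (D u - δ)
    ((P ∧ ¬R ∧ ¬Z) ∨ (¬P ∧ R ∧ ¬Z) ∨ (¬P ∧ ¬R ∧ Z)) ∧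
    (P → G a = u a) ∧
    (R → Real.sign (G a) = Real.sign (u a) ∧ 0 < |G a| ∧ |G a| < |u a|) ∧
    (Z → G a = 0) :=
  stmt_17_general n δ hδ u a
end
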